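/- arXiv:1702.07530 — 6 statements merged into one kernel-verified Lean document; each statement's English description precedes it below -/
import Mathlib

section
/- For λ > 0 and c ∈ ℝ, let u^{λ,c} be the unique continuous viscosity solution of (B + λId)u + H(x, Du) = c𝟙. Then λ u^{λ,c} converges uniformly on M, as λ → 0⁺, to the constant function (c − c(H))𝟙. -/
open scoped RealInnerProductSpace
open Filter MeasureTheory Set

noncomputable section

/-- `ℝ^N` with the Euclidean structure; `ℤ^N`-periodic functions on it represent
functions on the flat torus `M = ℝ^N/ℤ^N`. -/
abbrev Euc (N : ℕ) : Type := EuclideanSpace ℝ (Fin N)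

/-- `f : ℝ^N → ℝ` is `ℤ^N`-periodic, i.e. it descends to the flat torus `M = ℝ^N/ℤ^N`. -/
def ZPeriodic {N : ℕ} (f : Euc N → ℝ) : Prop :=
  ∀ (x : Euc N) (k : Fin N → ℤ),
    f (x + (WithLp.equiv 2 (Fin N → ℝ)).symm (fun i => (k i : ℝ))) = f x

/-- `p` belongs to the superdifferential `D⁺u(x)`, i.e.
`limsup_{y→x} (u(y) − u(x) − ⟨p, y−x⟩)/|y−x| ≤ 0`. -/
def InSuperDiff {N : ℕ} (u : Euc N → ℝ) (x p : Euc N) : Prop :=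
  ∀ ε > 0, ∃ δ > 0, ∀ y : Euc N, dist y x < δ →
    u y - u x - ⟪p, y - x⟫ ≤ ε * dist y x

/-- `p` belongs to the subdifferential `D⁻u(x)`, i.e.
`liminf_{y→x} (u(y) − u(x) − ⟨p, y−x⟩)/|y−x| ≥ 0`. -/
def InSubDiff {N : ℕ} (u : Euc N → ℝ) (x p : Euc N) : Prop :=
  ∀ ε > 0, ∃ δ > 0, ∀ y : Euc N, dist y x < δ →
    -(ε * dist y x) ≤ u y - u x - ⟪p, y - x⟫

/-- `u` is a continuous viscosity subsolution of `(B + λ Id)u + H(x,Du) = c𝟙` on the torus. -/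
def IsSubsol {N m : ℕ} (H : Fin m → Euc N → Euc N → ℝ) (B : Matrix (Fin m) (Fin m) ℝ)
    (lam c : ℝ) (u : Fin m → Euc N → ℝ) : Prop :=
  (∀ i, Continuous (u i)) ∧ (∀ i, ZPeriodic (u i)) ∧
  ∀ (x : Euc N) (i : Fin m) (p : Euc N), InSuperDiff (u i) x p →
    H i x p + (B.mulVec (fun j => u j x) i + lam * u i x) ≤ c

/-- `u` is a continuous viscosity supersolution of `(B + λ Id)u + H(x,Du) = c𝟙` on the torus. -/
def IsSupersol {N m : ℕ} (H : Fin m → Euc N → Euc N → ℝ) (B : Matrix (Fin m) (Fin m) ℝ)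
    (lam c : ℝ) (u : Fin m → Euc N → ℝ) : Prop :=
  (∀ i, Continuous (u i)) ∧ (∀ i, ZPeriodic (u i)) ∧
  ∀ (x : Euc N) (i : Fin m) (p : Euc N), InSubDiff (u i) x p →
    c ≤ H i x p + (B.mulVec (fun j => u j x) i + lam * u i x)

/-- `u` is a continuous viscosity solution of `(B + λ Id)u + H(x,Du) = c𝟙` on the torus. -/
def IsSol {N m : ℕ} (H : Fin m → Euc N → Euc N → ℝ) (B : Matrix (Fin m) (Fin m) ℝ)
    (lam c : ℝ) (u : Fin m → Euc N → ℝ) : Prop :=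
  IsSubsol H B lam c u ∧ IsSupersol H B lam c u

/-- The critical value `c(H)`: the infimum of the `c` for which the system
`Bu + H(x,Du) = c𝟙` admits a continuous viscosity subsolution. -/
def critVal {N m : ℕ} (H : Fin m → Euc N → Euc N → ℝ) (B : Matrix (Fin m) (Fin m) ℝ) : ℝ :=
  sInf {c : ℝ | ∃ u, IsSubsol H B 0 c u}

/-- The standing assumptions: each `H i` is continuous, `ℤ^N`-periodic in `x`, convex in `p` and
pinched between `α(|p|)` and `β(|p|)`; `B` has nonpositive off-diagonal entries, zero row sums
and is irreducible. -/
def Standing {N m : ℕ} (H : Fin m → Euc N → Euc N → ℝ) (B : Matrix (Fin m) (Fin m) ℝ)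
    (α β : ℝ → ℝ) : Prop :=
  (∀ i, Continuous fun q : Euc N × Euc N => H i q.1 q.2) ∧
  (∀ i p, ZPeriodic fun x => H i x p) ∧
  (∀ i x, ConvexOn ℝ Set.univ (H i x)) ∧
  (∀ i x p, α ‖p‖ ≤ H i x p ∧ H i x p ≤ β ‖p‖) ∧
  (∀ i j, i ≠ j → B i j ≤ 0) ∧
  (∀ i, ∑ j, B i j = 0) ∧
  (∀ I : Finset (Fin m), I.Nonempty → I ≠ Finset.univ → ∃ i ∈ I, ∃ j, j ∉ I ∧ B i j ≠ 0)

namespace VanishAux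


def intVec {N : ℕ} (k : Fin N → ℤ) : Euc N :=
  (WithLp.equiv 2 (Fin N → ℝ)).symm (fun i => (k i : ℝ))

lemma zper {N : ℕ} {f : Euc N → ℝ} (h : ZPeriodic f) (x : Euc N) (k : Fin N → ℤ) :
    f (x - intVec k) = f x := by
  have h2 : f (x - intVec k + intVec k) = f (x - intVec k) := h (x - intVec k) k
  rw [sub_add_cancel] at h2; exact h2.symm

lemma norm_fract_le {N : ℕ} (x : Euc N) :
    ‖x - intVec (fun a => ⌊x a⌋)‖ ≤ Real.sqrt N := by
  rw [EuclideanSpace.norm_eq]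
  apply Real.sqrt_le_sqrt
  have : ∀ a : Fin N, ‖(x - intVec (fun a => ⌊x a⌋)) a‖ ^ 2 ≤ 1 := by
    intro a
    have ha : (x - intVec (fun a => ⌊x a⌋)) a = Int.fract (x a) := by
      simp [intVec, Int.fract, WithLp.equiv, sub_eq_add_neg]
    rw [ha, Real.norm_eq_abs, sq_abs]
    nlinarith [Int.fract_nonneg (x a), Int.fract_lt_one (x a)]
  calc ∑ a, ‖(x - intVec (fun a => ⌊x a⌋)) a‖ ^ 2 ≤ ∑ _a : Fin N, (1:ℝ) :=
        Finset.sum_le_sum fun a _ => this a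
    _ = N := by simp

lemma bdd_of_periodic {N : ℕ} {f : Euc N → ℝ} (hc : Continuous f) (hp : ZPeriodic f) :
    ∃ C, 0 ≤ C ∧ ∀ x, |f x| ≤ C := by
  obtain ⟨z, _, hmax⟩ := (isCompact_closedBall (0:Euc N) (Real.sqrt N)).exists_isMaxOn
    ⟨0, by simp [Real.sqrt_nonneg]⟩ hc.abs.continuousOn
  refine ⟨|f z|, abs_nonneg _, fun x => ?_⟩
  have h1 : f x = f (x - intVec (fun a => ⌊x a⌋)) := (zper hp x _).symm
  rw [h1]
  exact hmax (by simpa [Metric.mem_closedBall, dist_zero_right] using norm_fract_le x)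

lemma bdd_family {N m : ℕ} (u : Fin m → Euc N → ℝ) (hc : ∀ i, Continuous (u i))
    (hp : ∀ i, ZPeriodic (u i)) : ∃ C, 0 ≤ C ∧ ∀ i x, |u i x| ≤ C := by
  choose g hg0 hg using fun i => bdd_of_periodic (hc i) (hp i)
  exact ⟨∑ i, g i, Finset.sum_nonneg fun i _ => hg0 i,
    fun i x => (hg i x).trans (Finset.single_le_sum (fun j _ => hg0 j) (Finset.mem_univ i))⟩


lemma mem_superdiff_of_quad {N : ℕ} {u : Euc N → ℝ} {x p : Euc N} {e : ℝ} (he : 0 < e)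
    (h : ∀ y, u y - u x - ⟪p, y - x⟫ ≤ ‖y - x‖ ^ 2 / (2 * e)) : InSuperDiff u x p := by
  intro ε hε
  refine ⟨2 * e * ε, by positivity, fun y hy => ?_⟩
  have hd : dist y x = ‖y - x‖ := dist_eq_norm y x
  rw [hd] at hy ⊢
  have hn : (0:ℝ) ≤ ‖y - x‖ := norm_nonneg _
  have h2 : ‖y - x‖ ^ 2 / (2 * e) ≤ ε * ‖y - x‖ := by
    rw [div_le_iff₀ (by positivity)]
    nlinarith
  linarith [h y]

lemma mem_subdiff_of_quad {N : ℕ} {u : Euc N → ℝ} {x p : Euc N} {e : ℝ} (he : 0 < e)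
    (h : ∀ y, -(‖y - x‖ ^ 2 / (2 * e)) ≤ u y - u x - ⟪p, y - x⟫) : InSubDiff u x p := by
  intro ε hε
  refine ⟨2 * e * ε, by positivity, fun y hy => ?_⟩
  have hd : dist y x = ‖y - x‖ := dist_eq_norm y x
  rw [hd] at hy ⊢
  have hn : (0:ℝ) ≤ ‖y - x‖ := norm_nonneg _
  have h2 : ‖y - x‖ ^ 2 / (2 * e) ≤ ε * ‖y - x‖ := by
    rw [div_le_iff₀ (by positivity)]
    nlinarith
  linarith [h y]

lemma exists_max {N m : ℕ} [Nonempty (Fin m)] (u v : Fin m → Euc N → ℝ)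
    (huc : ∀ i, Continuous (u i)) (hup : ∀ i, ZPeriodic (u i))
    (hvc : ∀ i, Continuous (v i)) (hvp : ∀ i, ZPeriodic (v i))
    {Cu Cv : ℝ} (hCu : ∀ i x, |u i x| ≤ Cu) (hCv : ∀ i x, |v i x| ≤ Cv)
    {e : ℝ} (he : 0 < e) :
    ∃ (i : Fin m) (x0 y0 : Euc N), ‖x0‖ ≤ Real.sqrt N ∧
      ∀ (j : Fin m) (x y : Euc N),
        u j x - v j y - ‖x - y‖ ^ 2 / (2 * e) ≤ u i x0 - v i y0 - ‖x0 - y0‖ ^ 2 / (2 * e) := by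
  have hCu0 : 0 ≤ Cu := (abs_nonneg _).trans (hCu (Classical.arbitrary _) 0)
  have hCv0 : 0 ≤ Cv := (abs_nonneg _).trans (hCv (Classical.arbitrary _) 0)
  set R := Real.sqrt N with hR
  set r := Real.sqrt (2 * e * (2 * Cu + 2 * Cv)) with hr
  have hR0 : 0 ≤ R := Real.sqrt_nonneg _
  have hr0 : 0 ≤ r := Real.sqrt_nonneg _
  set Φ : Fin m → Euc N × Euc N → ℝ :=
    fun j q => u j q.1 - v j q.2 - ‖q.1 - q.2‖ ^ 2 / (2 * e) with hΦ
  have hΦc : ∀ j, Continuous (Φ j) := fun j =>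
    (((huc j).comp continuous_fst).sub ((hvc j).comp continuous_snd)).sub
      (((continuous_fst.sub continuous_snd).norm.pow 2).div_const _)
  set K : Set (Euc N × Euc N) := Metric.closedBall 0 R ×ˢ Metric.closedBall 0 (R + r) with hKdef
  have hK : IsCompact K := (isCompact_closedBall _ _).prod (isCompact_closedBall _ _)
  have hKne : K.Nonempty :=
    ⟨(0, 0), ⟨by simpa using hR0, by simpa using add_nonneg hR0 hr0⟩⟩
  choose q hqK hqmax using fun j => hK.exists_isMaxOn hKne (hΦc j).continuousOn
  obtain ⟨i, -, hi⟩ := Finset.exists_max_image Finset.univ (fun j => Φ j (q j))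
    Finset.univ_nonempty
  have hx0R : ‖(q i).1‖ ≤ R := by
    have := (hqK i).1
    simpa [mem_closedBall_zero_iff] using this
  refine ⟨i, (q i).1, (q i).2, hx0R, ?_⟩
  intro j x y
  set k : Fin N → ℤ := fun a => ⌊x a⌋ with hk
  set x' := x - intVec k with hx'
  set y' := y - intVec k with hy'
  have hux : u j x' = u j x := zper (hup j) x k
  have hvy : v j y' = v j y := zper (hvp j) y k
  have hxy : x - y = x' - y' := by simp [hx', hy', sub_sub_sub_cancel_right]
  have hx'R : ‖x'‖ ≤ R := norm_fract_le x
  have key : Φ j (x', y') ≤ Φ i (q i) := by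
    by_cases hcase : ‖x' - y'‖ ≤ r
    · have hmem : (x', y') ∈ K := by
        refine ⟨mem_closedBall_zero_iff.2 hx'R, mem_closedBall_zero_iff.2 ?_⟩
        have h1 : y' = x' - (x' - y') := by abel
        calc ‖y'‖ = ‖x' - (x' - y')‖ := by rw [← h1]
          _ ≤ ‖x'‖ + ‖x' - y'‖ := norm_sub_le _ _
          _ ≤ R + r := add_le_add hx'R hcase
      exact (hqmax j hmem).trans (hi j (Finset.mem_univ j))
    · push_neg at hcase
      have h1 : Φ j (x', y') ≤ -(Cu + Cv) := by
        have hsq : 2 * e * (2 * Cu + 2 * Cv) ≤ ‖x' - y'‖ ^ 2 := by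
          have := pow_le_pow_left₀ hr0 hcase.le 2
          rwa [Real.sq_sqrt (by positivity)] at this
        have hdiv : 2 * Cu + 2 * Cv ≤ ‖x' - y'‖ ^ 2 / (2 * e) := by
          rw [le_div_iff₀ (by positivity)]
          linarith
        have hu1 := (abs_le.1 (hCu j x')).2
        have hv1 := (abs_le.1 (hCv j y')).1
        simp only [hΦ]
        linarith
      have h2 : -(Cu + Cv) ≤ Φ i (x', x') := by
        have hu1 := (abs_le.1 (hCu i x')).1
        have hv1 := (abs_le.1 (hCv i x')).2
        simp only [hΦ]
        simp only [sub_self, norm_zero]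
        rw [zero_pow (by norm_num), zero_div]
        linarith
      have h3 : (x', x') ∈ K :=
        ⟨mem_closedBall_zero_iff.2 hx'R,
         mem_closedBall_zero_iff.2 (hx'R.trans (le_add_of_nonneg_right hr0))⟩
      have h4 : Φ i (x', x') ≤ Φ i (q i) := hqmax i h3
      linarith
  have hΦeq : Φ j (x', y') = u j x - v j y - ‖x - y‖ ^ 2 / (2 * e) := by
    simp only [hΦ]
    rw [hux, hvy, hxy]
  rw [hΦeq] at key
  exact key


lemma mulVec_eq {m : ℕ} (B : Matrix (Fin m) (Fin m) ℝ) (f : Fin m → ℝ) (i : Fin m) :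
    B.mulVec f i = ∑ j, B i j * f j := by
  simp [Matrix.mulVec, dotProduct]

set_option maxHeartbeats 1000000 in
lemma comparison {N m : ℕ} (hm : 1 ≤ m) {H : Fin m → Euc N → Euc N → ℝ}
    {B : Matrix (Fin m) (Fin m) ℝ} {α β : ℝ → ℝ} (hst : Standing H B α β)
    (hα : Tendsto α atTop atTop) {lam c₁ c₂ : ℝ} (hlam : 0 < lam)
    {u v : Fin m → Euc N → ℝ} (hu : IsSubsol H B lam c₁ u) (hv : IsSupersol H B lam c₂ v) :
    ∀ (i : Fin m) (x : Euc N), lam * (u i x - v i x) ≤ c₁ - c₂ := by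
  haveI : Nonempty (Fin m) := ⟨⟨0, hm⟩⟩
  obtain ⟨huc, hup, huineq⟩ := hu
  obtain ⟨hvc, hvp, hvineq⟩ := hv
  obtain ⟨hHc, hHp, -, hpinch, hBoff, hBrow, -⟩ := hst
  obtain ⟨Cu, hCu0, hCu⟩ := bdd_family u huc hup
  obtain ⟨Cv, hCv0, hCv⟩ := bdd_family v hvc hvp
  -- bound on coupling term
  set CB := ∑ i, ∑ j, |B i j| with hCBdef
  have hCB : ∀ (i : Fin m) (x : Euc N), |∑ j, B i j * u j x| ≤ CB * Cu := by
    intro i x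
    calc |∑ j, B i j * u j x| ≤ ∑ j, |B i j * u j x| := Finset.abs_sum_le_sum_abs _ _
      _ = ∑ j, |B i j| * |u j x| := by simp [abs_mul]
      _ ≤ ∑ j, |B i j| * Cu :=
          Finset.sum_le_sum fun j _ => mul_le_mul_of_nonneg_left (hCu j x) (abs_nonneg _)
      _ = (∑ j, |B i j|) * Cu := by rw [Finset.sum_mul]
      _ ≤ CB * Cu := by
          apply mul_le_mul_of_nonneg_right _ hCu0
          exact Finset.single_le_sum
            (f := fun i => ∑ j, |B i j|)
            (fun i _ => Finset.sum_nonneg fun j _ => abs_nonneg _) (Finset.mem_univ i)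
  set A := c₁ + CB * Cu + lam * Cu with hAdef
  -- coercivity bound on superdifferentials of u
  have hAbd : ∀ (i : Fin m) (x p : Euc N), InSuperDiff (u i) x p → α ‖p‖ ≤ A := by
    intro i x p hp
    have h1 := huineq x i p hp
    rw [mulVec_eq] at h1
    have h2 := (hpinch i x p).1
    have h3 := (abs_le.1 (hCB i x)).1
    have h4 := (abs_le.1 (hCu i x)).1
    have h5 : -(lam * Cu) ≤ lam * u i x := by nlinarith
    simp only [hAdef]
    linarith
  obtain ⟨K0, hK0⟩ : ∃ K0 : ℝ, ∀ s ≥ K0, A < α s := eventually_atTop.1 (hα.eventually_gt_atTop A)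
  set K := max K0 0 with hKdef
  have hK0' : 0 ≤ K := le_max_right _ _
  have hKbd : ∀ (i : Fin m) (x p : Euc N), InSuperDiff (u i) x p → ‖p‖ ≤ K := by
    intro i x p hp
    by_contra hgt
    push_neg at hgt
    exact absurd (hAbd i x p hp) (not_le.2 (hK0 _ ((le_max_left _ _).trans hgt.le)))
  -- it suffices to prove the bound up to η
  have main : ∀ η > 0, ∀ (i : Fin m) (x : Euc N), lam * (u i x - v i x) ≤ c₁ - c₂ + η := by
    intro η hη
    set R1 : ℝ := Real.sqrt N + 1 with hR1
    have hR10 : 0 ≤ R1 := by positivity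
    set Q : Set (Euc N × Euc N) := Metric.closedBall 0 R1 ×ˢ Metric.closedBall 0 K with hQdef
    have hQ : IsCompact Q := (isCompact_closedBall _ _).prod (isCompact_closedBall _ _)
    -- uniform continuity of each H i on Q
    have hδex : ∀ i : Fin m, ∃ δ > 0, δ ≤ 1 ∧ ∀ a b p' : Euc N,
        a ∈ Metric.closedBall (0:Euc N) R1 → b ∈ Metric.closedBall (0:Euc N) R1 →
        p' ∈ Metric.closedBall (0:Euc N) K → dist a b < δ →
        |H i a p' - H i b p'| ≤ η := by
      intro i
      have huc' := hQ.uniformContinuousOn_of_continuous (hHc i).continuousOn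
      rw [Metric.uniformContinuousOn_iff] at huc'
      obtain ⟨δ, hδ0, hδ⟩ := huc' η hη
      refine ⟨min δ 1, by positivity, min_le_right _ _, fun a b p' ha hb hp' hab => ?_⟩
      have hd : dist ((a, p') : Euc N × Euc N) (b, p') < δ := by
        rw [Prod.dist_eq]
        simp only [dist_self]
        exact lt_of_le_of_lt (max_le (le_refl _) dist_nonneg)
          (lt_of_lt_of_le hab (min_le_left _ _))
      have := hδ (a, p') ⟨ha, hp'⟩ (b, p') ⟨hb, hp'⟩ hd
      rw [Real.dist_eq] at this
      exact this.le
    choose δf hδf0 hδf1 hδfP using hδex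
    set δ := Finset.univ.inf' Finset.univ_nonempty δf with hδdef
    have hδ0 : 0 < δ := (Finset.lt_inf'_iff _).2 fun i _ => hδf0 i
    have hδle1 : δ ≤ 1 :=
      (Finset.inf'_le _ (Finset.mem_univ (Classical.arbitrary _))).trans (hδf1 _)
    set e := min 1 (δ ^ 2 / (4 * Cu + 4 * Cv + 1)) with hedef
    have he : 0 < e := lt_min one_pos (by positivity)
    have he1 : e ≤ 1 := min_le_left _ _
    obtain ⟨i, x0, y0, hx0, hmax⟩ := exists_max u v huc hup hvc hvp hCu hCv he
    set p : Euc N := e⁻¹ • (x0 - y0) with hpdef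
    -- p is in the superdifferential of u i at x0
    have hps : InSuperDiff (u i) x0 p := by
      apply mem_superdiff_of_quad he
      intro y
      have h := hmax i y y0
      have hle : u i y - u i x0 ≤ (‖y - y0‖ ^ 2 - ‖x0 - y0‖ ^ 2) / (2 * e) := by
        rw [sub_div]; linarith
      have hid : ‖y - y0‖ ^ 2 = ‖x0 - y0‖ ^ 2 + 2 * ⟪x0 - y0, y - x0⟫ + ‖y - x0‖ ^ 2 := by
        have h1 : y - y0 = (x0 - y0) + (y - x0) := by abel
        rw [h1, norm_add_sq_real]
      have hnum : ‖y - y0‖ ^ 2 - ‖x0 - y0‖ ^ 2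
          = 2 * ⟪x0 - y0, y - x0⟫ + ‖y - x0‖ ^ 2 := by rw [hid]; ring
      rw [hnum] at hle
      have hdivsplit : (2 * ⟪x0 - y0, y - x0⟫ + ‖y - x0‖ ^ 2) / (2 * e)
          = e⁻¹ * ⟪x0 - y0, y - x0⟫ + ‖y - x0‖ ^ 2 / (2 * e) := by
        field_simp
      rw [hdivsplit] at hle
      have hinner : ⟪p, y - x0⟫ = e⁻¹ * ⟪x0 - y0, y - x0⟫ := real_inner_smul_left _ _ _
      rw [hinner]
      linarith
    -- p is in the subdifferential of v i at y0
    have hpsub : InSubDiff (v i) y0 p := by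
      apply mem_subdiff_of_quad he
      intro z
      have h := hmax i x0 z
      have hle : (‖x0 - y0‖ ^ 2 - ‖x0 - z‖ ^ 2) / (2 * e) ≤ v i z - v i y0 := by
        rw [sub_div]; linarith
      have hid : ‖x0 - z‖ ^ 2 = ‖x0 - y0‖ ^ 2 - 2 * ⟪x0 - y0, z - y0⟫ + ‖z - y0‖ ^ 2 := by
        have h1 : x0 - z = (x0 - y0) - (z - y0) := by abel
        rw [h1, norm_sub_sq_real]
      have hnum : ‖x0 - y0‖ ^ 2 - ‖x0 - z‖ ^ 2
          = 2 * ⟪x0 - y0, z - y0⟫ - ‖z - y0‖ ^ 2 := by rw [hid]; ring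
      rw [hnum] at hle
      have hdivsplit : (2 * ⟪x0 - y0, z - y0⟫ - ‖z - y0‖ ^ 2) / (2 * e)
          = e⁻¹ * ⟪x0 - y0, z - y0⟫ - ‖z - y0‖ ^ 2 / (2 * e) := by
        field_simp
      rw [hdivsplit] at hle
      have hinner : ⟪p, z - y0⟫ = e⁻¹ * ⟪x0 - y0, z - y0⟫ := real_inner_smul_left _ _ _
      rw [hinner]
      linarith
    have hpK : ‖p‖ ≤ K := hKbd i x0 p hps
    -- distance between x0 and y0 is small
    have hxy2 : ‖x0 - y0‖ ^ 2 ≤ 2 * e * (2 * Cu + 2 * Cv) := by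
      have h := hmax i x0 x0
      simp only [sub_self, norm_zero] at h
      rw [zero_pow (by norm_num), zero_div] at h
      have h2 : ‖x0 - y0‖ ^ 2 / (2 * e) ≤ v i x0 - v i y0 := by linarith
      have h3 := (abs_le.1 (hCv i x0)).2
      have h4 := (abs_le.1 (hCv i y0)).1
      rw [div_le_iff₀ (by positivity)] at h2
      have h5 : v i x0 - v i y0 ≤ 2 * Cv := by linarith
      have h6 : (v i x0 - v i y0) * (2 * e) ≤ 2 * Cv * (2 * e) :=
        mul_le_mul_of_nonneg_right h5 (by positivity)
      have h7 : 0 ≤ e * Cu := mul_nonneg he.le hCu0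
      have h8 : 2 * e * (2 * Cu + 2 * Cv) = 2 * Cv * (2 * e) + 4 * (e * Cu) := by ring
      linarith
    have hxyδ : ‖x0 - y0‖ < δ := by
      have hemin : e ≤ δ ^ 2 / (4 * Cu + 4 * Cv + 1) := min_le_right _ _
      rw [le_div_iff₀ (by positivity)] at hemin
      have h8 : 2 * e * (2 * Cu + 2 * Cv) = e * (4 * Cu + 4 * Cv + 1) - e := by ring
      have h1 : ‖x0 - y0‖ ^ 2 < δ ^ 2 := by linarith
      exact lt_of_pow_lt_pow_left₀ 2 hδ0.le h1
    have hy0 : ‖y0‖ ≤ R1 := by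
      have h1 : y0 = x0 - (x0 - y0) := by abel
      calc ‖y0‖ = ‖x0 - (x0 - y0)‖ := by rw [← h1]
        _ ≤ ‖x0‖ + ‖x0 - y0‖ := norm_sub_le _ _
        _ ≤ R1 := by simp only [hR1]; linarith [hxyδ.le.trans hδle1]
    have hx0' : ‖x0‖ ≤ R1 := hx0.trans (by simp only [hR1]; linarith)
    -- viscosity inequalities
    have hsub := huineq x0 i p hps
    have hsup := hvineq y0 i p hpsub
    rw [mulVec_eq] at hsub hsup
    have hH : |H i x0 p - H i y0 p| ≤ η := by
      apply hδfP i x0 y0 p (mem_closedBall_zero_iff.2 hx0') (mem_closedBall_zero_iff.2 hy0)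
        (mem_closedBall_zero_iff.2 hpK)
      rw [dist_eq_norm]
      exact lt_of_lt_of_le hxyδ (Finset.inf'_le _ (Finset.mem_univ i))
    -- coupling estimate
    have hcouple : ∑ j, B i j * v j y0 ≤ ∑ j, B i j * u j x0 := by
      have hd : ∀ j, u j x0 - v j y0 ≤ u i x0 - v i y0 := fun j => by
        have := hmax j x0 y0; linarith
      have hnn : (0:ℝ) ≤ ∑ j, B i j * (u j x0 - v j y0 - (u i x0 - v i y0)) := by
        apply Finset.sum_nonneg
        intro j _
        rcases eq_or_ne j i with rfl | hne
        · simp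
        · have hb := hBoff i j (Ne.symm hne)
          have hdj : u j x0 - v j y0 - (u i x0 - v i y0) ≤ 0 := by linarith [hd j]
          nlinarith
      have hexp : ∑ j, B i j * (u j x0 - v j y0 - (u i x0 - v i y0))
          = (∑ j, B i j * u j x0) - (∑ j, B i j * v j y0)
            - (∑ j, B i j) * (u i x0 - v i y0) := by
        rw [Finset.sum_mul]
        rw [← Finset.sum_sub_distrib, ← Finset.sum_sub_distrib]
        congr 1
        ext j
        ring
      rw [hexp, hBrow i] at hnn
      linarith
    have habs := abs_le.1 hH
    have hfinal : lam * (u i x0 - v i y0) ≤ c₁ - c₂ + η := by linarith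
    intro j x
    have h := hmax j x x
    simp only [sub_self, norm_zero] at h
    rw [zero_pow (by norm_num), zero_div] at h
    have hq : (0:ℝ) ≤ ‖x0 - y0‖ ^ 2 / (2 * e) := by positivity
    have h2 : u j x - v j x ≤ u i x0 - v i y0 := by linarith
    have h3 : lam * (u j x - v j x) ≤ lam * (u i x0 - v i y0) :=
      mul_le_mul_of_nonneg_left h2 hlam.le
    linarith
  intro i x
  exact le_of_forall_pos_le_add fun η hη => main η hη i x


lemma superdiff_add_const {N : ℕ} {g : Euc N → ℝ} {k : ℝ} {x p : Euc N}
    (h : InSuperDiff (fun y => g y + k) x p) : InSuperDiff g x p := by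
  intro ε hε
  obtain ⟨δ, hδ, hh⟩ := h ε hε
  exact ⟨δ, hδ, fun y hy => by have := hh y hy; simpa using this⟩

lemma subdiff_add_const {N : ℕ} {g : Euc N → ℝ} {k : ℝ} {x p : Euc N}
    (h : InSubDiff (fun y => g y + k) x p) : InSubDiff g x p := by
  intro ε hε
  obtain ⟨δ, hδ, hh⟩ := h ε hε
  exact ⟨δ, hδ, fun y hy => by have := hh y hy; simpa using this⟩

end VanishAux

open VanishAux in
/-- `λ u^{λ,c}` converges uniformly on `M`, as `λ → 0⁺`, to the constant `(c − c(H))𝟙`. -/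
theorem lambda_ulamc_tendsto_const
    {N m : ℕ} (hN : 1 ≤ N) (hm : 1 ≤ m)
    (H : Fin m → Euc N → Euc N → ℝ) (B : Matrix (Fin m) (Fin m) ℝ) (α β : ℝ → ℝ)
    (hst : Standing H B α β)
    (hα : Tendsto α atTop atTop) (hβ : Tendsto β atTop atTop)
    (hcrit : ∃ u, IsSol H B 0 (critVal H B) u)
    (ulamc : ℝ → ℝ → Fin m → Euc N → ℝ)
    (hsol : ∀ lam, 0 < lam → ∀ c, IsSol H B lam c (ulamc lam c))
    (huniq : ∀ lam, 0 < lam → ∀ c v, IsSol H B lam c v → v = ulamc lam c)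
    :
    ∀ c : ℝ, ∀ ε > 0, ∃ δ > 0, ∀ lam, 0 < lam → lam < δ →
      ∀ (i : Fin m) (x : Euc N), |lam * ulamc lam c i x - (c - critVal H B)| < ε := by
  obtain ⟨w, hwsub, hwsup⟩ := hcrit
  obtain ⟨hwc, hwp, hwineq⟩ := hwsub
  obtain ⟨-, -, hwineq'⟩ := hwsup
  obtain ⟨W, hW0, hW⟩ := bdd_family w hwc hwp
  have hrow := hst.2.2.2.2.2.1
  intro c ε hε
  refine ⟨ε / (2 * W + 2), by positivity, fun lam hlam hlamδ i x => ?_⟩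
  set cH := critVal H B with hcH
  set k := (c - cH) / lam with hkdef
  have hk : lam * k = c - cH := by
    rw [hkdef]; field_simp
  set v : Fin m → Euc N → ℝ := fun i x => w i x + k with hvdef
  have hmv : ∀ (x : Euc N) (i : Fin m),
      B.mulVec (fun j => v j x) i = B.mulVec (fun j => w j x) i := by
    intro x i
    rw [mulVec_eq, mulVec_eq]
    have : ∑ j, B i j * (w j x + k) = ∑ j, B i j * w j x + (∑ j, B i j) * k := by
      rw [Finset.sum_mul, ← Finset.sum_add_distrib]
      congr 1; ext j; ring
    rw [this, hrow i, zero_mul, add_zero]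
  have hvc : ∀ i, Continuous (v i) := fun i => (hwc i).add continuous_const
  have hvp : ∀ i, ZPeriodic (v i) := fun i x kk => by
    simp only [hvdef]
    rw [hwp i x kk]
  -- v is a subsolution at level c + lam * W
  have hv_sub : IsSubsol H B lam (c + lam * W) v := by
    refine ⟨hvc, hvp, fun x i p hp => ?_⟩
    have hp' : InSuperDiff (w i) x p := superdiff_add_const hp
    have h0 := hwineq x i p hp'
    rw [zero_mul, add_zero] at h0
    have hwb := (abs_le.1 (hW i x)).2
    have hlw : lam * w i x ≤ lam * W := mul_le_mul_of_nonneg_left hwb hlam.le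
    rw [hmv x i]
    simp only [hvdef]
    have : lam * (w i x + k) = lam * w i x + (c - cH) := by rw [mul_add, hk]
    rw [this]
    linarith
  -- v is a supersolution at level c - lam * W
  have hv_sup : IsSupersol H B lam (c - lam * W) v := by
    refine ⟨hvc, hvp, fun x i p hp => ?_⟩
    have hp' : InSubDiff (w i) x p := subdiff_add_const hp
    have h0 := hwineq' x i p hp'
    rw [zero_mul, add_zero] at h0
    have hwb := (abs_le.1 (hW i x)).1
    have hlw : lam * W * (-1) ≤ lam * w i x := by nlinarith
    rw [hmv x i]
    simp only [hvdef]
    have : lam * (w i x + k) = lam * w i x + (c - cH) := by rw [mul_add, hk]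
    rw [this]
    linarith
  obtain ⟨husub, husup⟩ := hsol lam hlam c
  have comp1 := comparison hm ⟨hst.1, hst.2.1, hst.2.2.1, hst.2.2.2.1, hst.2.2.2.2.1,
    hst.2.2.2.2.2.1, hst.2.2.2.2.2.2⟩ hα hlam husub hv_sup i x
  have comp2 := comparison hm ⟨hst.1, hst.2.1, hst.2.2.1, hst.2.2.2.1, hst.2.2.2.2.1,
    hst.2.2.2.2.2.1, hst.2.2.2.2.2.2⟩ hα hlam hv_sub husup i x
  have hvix : v i x = w i x + k := rfl
  have hw1 := (abs_le.1 (hW i x)).1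
  have hw2 := (abs_le.1 (hW i x)).2
  have hlw1 : lam * w i x ≤ lam * W := mul_le_mul_of_nonneg_left hw2 hlam.le
  have hlw2 : -(lam * W) ≤ lam * w i x := by nlinarith
  have hlamW : 2 * (lam * W) + 2 * lam < ε := by
    have h1 : lam * (2 * W + 2) < ε :=
      (lt_div_iff₀ (by positivity : (0:ℝ) < 2 * W + 2)).1 hlamδ
    nlinarith
  rw [hvix] at comp1 comp2
  have e1 : lam * (ulamc lam c i x - (w i x + k)) = lam * ulamc lam c i x
      - lam * w i x - (c - cH) := by linear_combination (-1 : ℝ) * hk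
  have e2 : lam * (w i x + k - ulamc lam c i x) = lam * w i x + (c - cH)
      - lam * ulamc lam c i x := by linear_combination hk
  rw [e1] at comp1
  rw [e2] at comp2
  rw [abs_lt]
  constructor
  · -- -ε < lam * u - (c - cH)
    -- comp2: lam*w + (c-cH) - lam*u ≤ (c + lam*W) - c = lam*W
    have : lam * ulamc lam c i x - (c - cH) ≥ lam * w i x - lam * W := by linarith
    nlinarith
  · -- comp1: lam*u - lam*w - (c-cH) ≤ c - (c - lam*W) = lam*W
    nlinarith
end
end

section
/- For every c ∈ ℝ there exists a constant C_c, depending only on c, H_1, …, H_m and B, such that every continuous viscosity subsolution u = (u_1,…,u_m) of Bu + H(x, Du) = c𝟙 satisfies ‖u_i − u_j‖_∞ ≤ C_c for all i, j ∈ {1,…,m}. -/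
open scoped RealInnerProductSpace
open Filter MeasureTheory Set

noncomputable section

lemma matrix_gap_bound {m : ℕ} (hm : 1 ≤ m) (B : Matrix (Fin m) (Fin m) ℝ)
    (hoff : ∀ i j, i ≠ j → B i j ≤ 0) (hrow : ∀ i, ∑ j, B i j = 0)
    (hirr : ∀ I : Finset (Fin m), I.Nonempty → I ≠ Finset.univ →
      ∃ i ∈ I, ∃ j, j ∉ I ∧ B i j ≠ 0) (K : ℝ) :
    ∃ C : ℝ, ∀ θ : Fin m → ℝ, (∀ i, ∑ j, B i j * θ j ≤ K) → ∀ i j, θ i - θ j ≤ C := by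
  classical
  have hmne : Nonempty (Fin m) := ⟨⟨0, hm⟩⟩
  set P : Finset (Fin m × Fin m) :=
    Finset.univ.filter (fun q : Fin m × Fin m => q.1 ≠ q.2 ∧ B q.1 q.2 ≠ 0) with hP
  set εB : ℝ := if h : P.Nonempty then P.inf' h (fun q => -(B q.1 q.2)) else 1 with hεB
  have hεpos : 0 < εB := by
    rw [hεB]
    split_ifs with h
    · obtain ⟨q, hq, hqe⟩ := Finset.exists_mem_eq_inf' h (fun q => -(B q.1 q.2))
      rw [hqe]
      simp only [hP, Finset.mem_filter] at hq
      have h1 := hoff q.1 q.2 hq.2.1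
      have h2 := hq.2.2
      rcases lt_or_eq_of_le h1 with h | h
      · linarith
      · exact absurd h h2
    · norm_num
  have hεle : ∀ i j, i ≠ j → B i j ≠ 0 → εB ≤ -B i j := by
    intro i j hij hBij
    have hmem : (i, j) ∈ P := by simp [hP, hij, hBij]
    rw [hεB]
    rw [dif_pos ⟨_, hmem⟩]
    exact Finset.inf'_le _ hmem
  set S : ℝ := ∑ i, ∑ j, |B i j| with hS
  have hSnn : 0 ≤ S := Finset.sum_nonneg fun i _ => Finset.sum_nonneg fun j _ => abs_nonneg _
  set f : ℝ → ℝ := fun D => D + max (K + S * D) 0 / εB with hf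
  have hfmono : ∀ D, D ≤ f D := fun D =>
    le_add_of_nonneg_right (div_nonneg (le_max_right _ _) hεpos.le)
  have hiter : ∀ n : ℕ, 0 ≤ f^[n] 0 := by
    intro n
    induction n with
    | zero => simp
    | succ n ih => rw [Function.iterate_succ_apply']; exact le_trans ih (hfmono _)
  refine ⟨f^[m] 0, ?_⟩
  intro θ hθ
  obtain ⟨i₀, hi₀⟩ := Finite.exists_max θ
  have key : ∀ n : ℕ, ∃ I : Finset (Fin m), i₀ ∈ I ∧ min (n + 1) m ≤ I.card ∧
      ∀ i ∈ I, θ i₀ - θ i ≤ f^[n] 0 := by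
    intro n
    induction n with
    | zero =>
      refine ⟨{i₀}, Finset.mem_singleton_self _, by simp [hm], ?_⟩
      intro i hi
      rw [Finset.mem_singleton] at hi
      simp [hi]
    | succ n ih =>
      obtain ⟨I, hi₀I, hcard, hbnd⟩ := ih
      by_cases hIuniv : I = Finset.univ
      · refine ⟨I, hi₀I, ?_, fun i hi => le_trans (hbnd i hi) ?_⟩
        · rw [hIuniv, Finset.card_univ, Fintype.card_fin]; omega
        · rw [Function.iterate_succ_apply']; exact hfmono _
      · obtain ⟨i, hiI, j₀, hj₀I, hBij₀⟩ := hirr I ⟨i₀, hi₀I⟩ hIuniv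
        set D : ℝ := f^[n] 0 with hD
        have hDnn : 0 ≤ D := hiter n
        have hij₀ : i ≠ j₀ := fun h => hj₀I (h ▸ hiI)
        -- row inequality recentered
        have h1 : ∑ j, B i j * (θ j - θ i) ≤ K := by
          have : ∑ j, B i j * (θ j - θ i) = ∑ j, B i j * θ j - (∑ j, B i j) * θ i := by
            rw [Finset.sum_mul, ← Finset.sum_sub_distrib]
            congr 1; ext j; ring
          rw [this, hrow i]
          simpa using hθ i
        -- split off j₀
        have h2 : B i j₀ * (θ j₀ - θ i) + ∑ j ∈ Finset.univ.erase j₀, B i j * (θ j - θ i)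
            = ∑ j, B i j * (θ j - θ i) :=
          Finset.add_sum_erase _ (fun j => B i j * (θ j - θ i)) (Finset.mem_univ j₀)
        have h3 : ∀ j ∈ Finset.univ.erase j₀, -(|B i j| * D) ≤ B i j * (θ j - θ i) := by
          intro j _
          by_cases hji : j = i
          · rw [hji]
            simp only [sub_self, mul_zero]
            have : 0 ≤ |B i i| * D := mul_nonneg (abs_nonneg _) hDnn
            linarith
          · have hB : B i j ≤ 0 := hoff i j (fun h => hji h.symm)
            have ht : θ j - θ i ≤ D := by
              have := hi₀ j
              have := hbnd i hiI
              linarith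
            have habs : -|B i j| ≤ B i j := neg_abs_le _
            nlinarith [mul_le_mul_of_nonpos_left ht hB, mul_le_mul_of_nonneg_right habs hDnn]
        have h4 : -(S * D) ≤ ∑ j ∈ Finset.univ.erase j₀, B i j * (θ j - θ i) := by
          have hsum1 : ∑ j ∈ Finset.univ.erase j₀, -(|B i j| * D)
              ≤ ∑ j ∈ Finset.univ.erase j₀, B i j * (θ j - θ i) := Finset.sum_le_sum h3
          have hsum2 : ∑ j ∈ Finset.univ.erase j₀, |B i j| ≤ S := by
            calc ∑ j ∈ Finset.univ.erase j₀, |B i j| ≤ ∑ j, |B i j| :=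
                  Finset.sum_le_sum_of_subset_of_nonneg (Finset.subset_univ _)
                    (fun j _ _ => abs_nonneg _)
              _ ≤ S := Finset.single_le_sum (f := fun i => ∑ j, |B i j|)
                  (fun i _ => Finset.sum_nonneg fun j _ => abs_nonneg _) (Finset.mem_univ i)
          have : ∑ j ∈ Finset.univ.erase j₀, -(|B i j| * D)
              = -((∑ j ∈ Finset.univ.erase j₀, |B i j|) * D) := by
            rw [Finset.sum_mul, ← Finset.sum_neg_distrib]
          rw [this] at hsum1
          have : -(S * D) ≤ -((∑ j ∈ Finset.univ.erase j₀, |B i j|) * D) := by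
            have := mul_le_mul_of_nonneg_right hsum2 hDnn
            linarith
          linarith
        have h5 : B i j₀ * (θ j₀ - θ i) ≤ K + S * D := by linarith
        have h6 : θ i - θ j₀ ≤ max (K + S * D) 0 / εB := by
          rcases le_or_gt (θ i - θ j₀) 0 with h | h
          · exact le_trans h (div_nonneg (le_max_right _ _) hεpos.le)
          · have ha : εB ≤ -B i j₀ := hεle i j₀ hij₀ hBij₀
            have : εB * (θ i - θ j₀) ≤ (-B i j₀) * (θ i - θ j₀) :=
              mul_le_mul_of_nonneg_right ha h.le
            have heq : (-B i j₀) * (θ i - θ j₀) = B i j₀ * (θ j₀ - θ i) := by ring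
            rw [le_div_iff₀ hεpos]
            calc (θ i - θ j₀) * εB = εB * (θ i - θ j₀) := by ring
              _ ≤ B i j₀ * (θ j₀ - θ i) := by rw [← heq]; exact this
              _ ≤ K + S * D := h5
              _ ≤ max (K + S * D) 0 := le_max_left _ _
        have h7 : θ i₀ - θ j₀ ≤ f^[n+1] 0 := by
          rw [Function.iterate_succ_apply']
          have := hbnd i hiI
          simp only [hf]
          linarith
        refine ⟨insert j₀ I, Finset.mem_insert_of_mem hi₀I, ?_, ?_⟩
        · rw [Finset.card_insert_of_notMem hj₀I]
          have hIle : I.card < m := by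
            have := Finset.card_lt_card (Finset.ssubset_univ_iff.mpr hIuniv)
            simpa using this
          omega
        · intro i' hi'
          rcases Finset.mem_insert.mp hi' with h | h
          · exact h ▸ h7
          · refine le_trans (hbnd i' h) ?_
            rw [Function.iterate_succ_apply']; exact hfmono _
  obtain ⟨I, _, hcard, hbnd⟩ := key m
  have hIuniv : I = Finset.univ := by
    apply Finset.eq_univ_of_card
    have : I.card ≤ m := by simpa using Finset.card_le_univ I
    simp only [Fintype.card_fin]
    omega
  intro i j
  have h1 := hbnd j (hIuniv ▸ Finset.mem_univ j)
  have h2 := hi₀ i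
  linarith


lemma periodic_reduce {N : ℕ} (f : Euc N → ℝ) (hp : ZPeriodic f) (x : Euc N) :
    ∃ x', x' ∈ Metric.closedBall (0 : Euc N) (Real.sqrt N) ∧ f x' = f x := by
  set k : Fin N → ℤ := fun i => -⌊x i⌋ with hk
  set x' : Euc N := x + (WithLp.equiv 2 (Fin N → ℝ)).symm (fun i => (k i : ℝ)) with hx'
  have happ : ∀ i, x' i = Int.fract (x i) := by
    intro i
    simp only [hx', hk, PiLp.add_apply, WithLp.equiv_symm_apply, WithLp.ofLp_toLp]
    push_cast
    rw [Int.fract]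
    ring
  refine ⟨x', ?_, hp x k⟩
  rw [Metric.mem_closedBall, dist_zero_right, EuclideanSpace.norm_eq]
  apply Real.sqrt_le_sqrt
  calc ∑ i, ‖x' i‖ ^ 2 ≤ ∑ _i : Fin N, (1 : ℝ) := by
        apply Finset.sum_le_sum
        intro i _
        rw [happ i, Real.norm_eq_abs]
        have h1 := Int.fract_nonneg (x i)
        have h2 := Int.fract_lt_one (x i)
        rw [abs_of_nonneg h1]
        nlinarith
    _ = N := by simp

lemma periodic_bddAbove {N : ℕ} (u : Euc N → ℝ) (hc : Continuous u) (hp : ZPeriodic u) :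
    ∃ M, ∀ x, u x ≤ M := by
  have hcomp : IsCompact (Metric.closedBall (0 : Euc N) (Real.sqrt N)) :=
    isCompact_closedBall _ _
  have hne : (Metric.closedBall (0 : Euc N) (Real.sqrt N)).Nonempty :=
    ⟨0, Metric.mem_closedBall_self (Real.sqrt_nonneg _)⟩
  obtain ⟨z, hz, hmax⟩ := hcomp.exists_isMaxOn hne hc.continuousOn
  refine ⟨u z, fun x => ?_⟩
  obtain ⟨x', hx'mem, hx'⟩ := periodic_reduce u hp x
  rw [← hx']
  exact hmax hx'mem

lemma exists_superdiff_near {N : ℕ} (u : Euc N → ℝ) (hc : Continuous u) (M : ℝ)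
    (hM : ∀ y, u y ≤ M) (x₀ : Euc N) {ε : ℝ} (hε : 0 < ε) :
    ∃ x p, dist x x₀ ≤ ε ∧ InSuperDiff u x p := by
  set n : ℝ := max 1 ((M - u x₀) / ε ^ 2) with hn
  have hn1 : (1 : ℝ) ≤ n := le_max_left _ _
  have hnpos : 0 < n := lt_of_lt_of_le one_pos hn1
  have hnε : M - u x₀ ≤ n * ε ^ 2 := by
    have h1 : (M - u x₀) / ε ^ 2 ≤ n := le_max_right _ _
    have h2 : (0:ℝ) < ε ^ 2 := by positivity
    calc M - u x₀ = (M - u x₀) / ε ^ 2 * ε ^ 2 := by field_simp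
      _ ≤ n * ε ^ 2 := mul_le_mul_of_nonneg_right h1 h2.le
  set g : Euc N → ℝ := fun y => u y - n * dist y x₀ ^ 2 with hg
  have hgc : Continuous g := by fun_prop
  have hcomp : IsCompact (Metric.closedBall x₀ ε) := isCompact_closedBall _ _
  obtain ⟨x, hxmem, hmax⟩ := hcomp.exists_isMaxOn
    ⟨x₀, Metric.mem_closedBall_self hε.le⟩ hgc.continuousOn
  have hglobal : ∀ y, g y ≤ g x := by
    intro y
    rcases le_or_gt (dist y x₀) ε with h | h
    · exact hmax (Metric.mem_closedBall.mpr h)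
    · have h1 : n * ε ^ 2 ≤ n * dist y x₀ ^ 2 := by
        apply mul_le_mul_of_nonneg_left _ hnpos.le
        nlinarith [dist_nonneg (x := y) (y := x₀)]
      have h2 : g y ≤ u x₀ := by
        have := hM y
        simp only [hg]
        linarith
      have h3 : g x₀ ≤ g x := hmax (Metric.mem_closedBall_self hε.le)
      have h4 : g x₀ = u x₀ := by simp [hg]
      linarith
  refine ⟨x, (2 * n) • (x - x₀), hxmem, ?_⟩
  intro ε' hε'
  refine ⟨ε' / n, by positivity, ?_⟩
  intro y hy
  have hkey : u y - u x - ⟪(2 * n) • (x - x₀), y - x⟫ ≤ n * ‖y - x‖ ^ 2 := by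
    have h1 : g y ≤ g x := hglobal y
    have h2 : dist y x₀ ^ 2 = ‖(y - x) + (x - x₀)‖ ^ 2 := by
      rw [dist_eq_norm]
      congr 2
      abel
    have h3 : ‖(y - x) + (x - x₀)‖ ^ 2
        = ‖y - x‖ ^ 2 + 2 * ⟪y - x, x - x₀⟫ + ‖x - x₀‖ ^ 2 := norm_add_sq_real _ _
    have h4 : ⟪(2 * n) • (x - x₀), y - x⟫ = 2 * n * ⟪y - x, x - x₀⟫ := by
      rw [real_inner_smul_left, real_inner_comm]
    have h5 : dist x x₀ ^ 2 = ‖x - x₀‖ ^ 2 := by rw [dist_eq_norm]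
    simp only [hg] at h1
    rw [h2, h3] at h1
    rw [h4]
    nlinarith
  have hnorm : ‖y - x‖ = dist y x := (dist_eq_norm y x).symm
  calc u y - u x - ⟪(2 * n) • (x - x₀), y - x⟫ ≤ n * ‖y - x‖ ^ 2 := hkey
    _ = n * dist y x * dist y x := by rw [hnorm]; ring
    _ ≤ n * (ε' / n) * dist y x := by
        apply mul_le_mul_of_nonneg_right _ dist_nonneg
        apply mul_le_mul_of_nonneg_left hy.le hnpos.le
    _ = ε' * dist y x := by field_simp

/-- Components of critical subsolutions differ by a bounded amount, with a constant depending
only on `c`, the Hamiltonians and the coupling matrix. -/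
theorem subsolutions_components_uniformly_close
    {N m : ℕ} (hN : 1 ≤ N) (hm : 1 ≤ m)
    (H : Fin m → Euc N → Euc N → ℝ) (B : Matrix (Fin m) (Fin m) ℝ) (α β : ℝ → ℝ)
    (hst : Standing H B α β)
    (hα : Tendsto α atTop atTop) (hβ : Tendsto β atTop atTop)
    :
    ∀ c : ℝ, ∃ C : ℝ, ∀ u : Fin m → Euc N → ℝ, IsSubsol H B 0 c u →
      ∀ (i j : Fin m) (x : Euc N), |u i x - u j x| ≤ C := by
  classical
  rcases hst with ⟨hHc, hHper, _hconv, hpinch, hoff, hrow, hirr⟩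
  intro c
  -- A uniform lower bound `A0` for all the Hamiltonians
  obtain ⟨r, hr⟩ : ∃ r, ∀ h ≥ r, β 0 ≤ α h := eventually_atTop.mp (hα.eventually_ge_atTop (β 0))
  set r' : ℝ := max r 0 with hr'
  have hr'nn : (0:ℝ) ≤ r' := le_max_right _ _
  set Kset : Set (Euc N × Euc N) :=
    (Metric.closedBall (0 : Euc N) (Real.sqrt N)) ×ˢ (Metric.closedBall (0 : Euc N) r') with hKset
  have hKc : IsCompact Kset := (isCompact_closedBall _ _).prod (isCompact_closedBall _ _)
  have hKne : Kset.Nonempty :=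
    ⟨(0, 0), ⟨Metric.mem_closedBall_self (Real.sqrt_nonneg _), Metric.mem_closedBall_self hr'nn⟩⟩
  have hAex : ∀ i : Fin m, ∃ Ai : ℝ, ∀ q ∈ Kset, Ai ≤ H i q.1 q.2 := by
    intro i
    obtain ⟨q0, _, hmin⟩ := hKc.exists_isMinOn hKne (hHc i).continuousOn
    exact ⟨H i q0.1 q0.2, fun q hq => hmin hq⟩
  choose A hA using hAex
  have hune : (Finset.univ : Finset (Fin m)).Nonempty := ⟨⟨0, hm⟩, Finset.mem_univ _⟩
  set A0 : ℝ := min (β 0) (Finset.univ.inf' hune A) with hA0def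
  have hA0 : ∀ i x p, A0 ≤ H i x p := by
    intro i x p
    rcases le_or_gt ‖p‖ r' with h | h
    · obtain ⟨x', hx'mem, hx'⟩ := periodic_reduce (fun y => H i y p) (hHper i p) x
      have h1 : A i ≤ H i x' p := hA i (x', p) ⟨hx'mem, by
        rw [Metric.mem_closedBall, dist_zero_right]; exact h⟩
      have h2 : A0 ≤ A i :=
        le_trans (min_le_right _ _) (Finset.inf'_le A (Finset.mem_univ i))
      linarith
    · have h1 : β 0 ≤ α ‖p‖ := hr _ (le_trans (le_max_left _ _) h.le)
      have h2 := (hpinch i x p).1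
      exact le_trans (min_le_left _ _) (le_trans h1 h2)
  obtain ⟨C, hC⟩ := matrix_gap_bound hm B hoff hrow hirr (c - A0)
  refine ⟨C, ?_⟩
  intro u hu i j x
  obtain ⟨huc, hup, husub⟩ := hu
  -- pointwise bound on the coupling term
  have hpt : ∀ (y : Euc N) (l : Fin m), ∑ j, B l j * u j y ≤ c - A0 := by
    intro y l
    by_contra hlt
    push_neg at hlt
    have hgc : Continuous fun z => ∑ j, B l j * u j z := by
      apply continuous_finset_sum
      intro j _
      exact continuous_const.mul (huc j)
    have hopen : IsOpen {z : Euc N | c - A0 < ∑ j, B l j * u j z} :=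
      isOpen_lt continuous_const hgc
    obtain ⟨ρ, hρ, hball⟩ := Metric.isOpen_iff.mp hopen y hlt
    obtain ⟨M, hM⟩ := periodic_bddAbove (u l) (huc l) (hup l)
    obtain ⟨xs, p, hxd, hsd⟩ := exists_superdiff_near (u l) (huc l) M hM y (half_pos hρ)
    have hxsball : xs ∈ Metric.ball y ρ := by
      rw [Metric.mem_ball]
      linarith
    have h1 := husub xs l p hsd
    have h2 : B.mulVec (fun j => u j xs) l = ∑ j, B l j * u j xs := by
      simp [Matrix.mulVec, dotProduct]
    rw [h2, zero_mul] at h1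
    have h3 := hA0 l xs p
    have h4 : c - A0 < ∑ j, B l j * u j xs := hball hxsball
    linarith
  have habs := hC (fun j => u j x) (fun l => hpt x l)
  rw [abs_sub_le_iff]
  exact ⟨habs i j, habs j i⟩
end
end

section
/- For every c ∈ ℝ there exists a constant κ_c, depending only on c, H_1, …, H_m and B, such that for every continuous viscosity subsolution u = (u_1,…,u_m) of Bu + H(x, Du) = c𝟙, each component u_i is κ_c-Lipschitz continuous on M. -/
open scoped RealInnerProductSpace
open Filter MeasureTheory Set

noncomputable section

namespace SubsolEquiLip

lemma sqrt_le_add (X s : ℝ) (hX : 0 ≤ X) (hs : 0 < s) :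
    Real.sqrt X ≤ s + (X - s^2)/(2*s) := by
  have h2 : (Real.sqrt X)^2 = X := Real.sq_sqrt hX
  have h3 : Real.sqrt X ≤ (X + s^2)/(2*s) := by
    rw [le_div_iff₀ (by positivity)]
    nlinarith [sq_nonneg (Real.sqrt X - s)]
  have : s + (X - s^2)/(2*s) = (X + s^2)/(2*s) := by field_simp; ring
  linarith

lemma sqrt_sq_add_sq_le (a σ : ℝ) (ha : 0 ≤ a) (hσ : 0 ≤ σ) :
    Real.sqrt (a^2+σ^2) ≤ a + σ := by
  rw [show a+σ = Real.sqrt ((a+σ)^2) from (Real.sqrt_sq (by positivity)).symm]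
  exact Real.sqrt_le_sqrt (by nlinarith)

lemma periodic_reduce {N : ℕ} (x : Euc N) :
    ∃ y : Euc N, ‖y‖ ≤ Real.sqrt N ∧ ∀ f : Euc N → ℝ, ZPeriodic f → f x = f y := by
  refine ⟨x + (WithLp.equiv 2 (Fin N → ℝ)).symm (fun i => ((-⌊x i⌋ : ℤ) : ℝ)), ?_, ?_⟩
  · have hcoord : ∀ i, (x + (WithLp.equiv 2 (Fin N → ℝ)).symm
        (fun i => ((-⌊x i⌋ : ℤ) : ℝ))) i = Int.fract (x i) := by
      intro i
      have : ((WithLp.equiv 2 (Fin N → ℝ)).symm (fun i => ((-⌊x i⌋ : ℤ) : ℝ))) i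
          = ((-⌊x i⌋ : ℤ) : ℝ) := rfl
      show x i + ((WithLp.equiv 2 (Fin N → ℝ)).symm (fun i => ((-⌊x i⌋ : ℤ) : ℝ))) i = _
      rw [this]; push_cast [Int.fract]; ring
    rw [EuclideanSpace.norm_eq]
    apply Real.sqrt_le_sqrt
    calc ∑ i, ‖(x + (WithLp.equiv 2 (Fin N → ℝ)).symm (fun i => ((-⌊x i⌋ : ℤ) : ℝ))) i‖^2
        ≤ ∑ _i : Fin N, (1:ℝ) := by
          apply Finset.sum_le_sum
          intro i _
          rw [hcoord i]
          have h1 := Int.fract_nonneg (x i)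
          have h2 := Int.fract_lt_one (x i)
          rw [Real.norm_eq_abs, abs_of_nonneg h1]
          nlinarith
      _ = (N:ℝ) := by simp
  · intro f hf
    exact (hf x _).symm

lemma bounded_of_periodic {N : ℕ} {f : Euc N → ℝ} (hc : Continuous f) (hp : ZPeriodic f) :
    ∃ C : ℝ, 0 ≤ C ∧ ∀ x z : Euc N, f x - f z ≤ C := by
  have hK : IsCompact (Metric.closedBall (0 : Euc N) (Real.sqrt N)) := isCompact_closedBall _ _
  have hne : (Metric.closedBall (0 : Euc N) (Real.sqrt N)).Nonempty :=
    ⟨0, by simp [Real.sqrt_nonneg]⟩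
  obtain ⟨a, -, ha⟩ := hK.exists_isMaxOn hne hc.continuousOn
  obtain ⟨b, -, hb⟩ := hK.exists_isMinOn hne hc.continuousOn
  refine ⟨f a - f b, ?_, ?_⟩
  · have : f b ≤ f a := by
      obtain ⟨y, hy, hyf⟩ := periodic_reduce (0 : Euc N)
      have hmem : y ∈ Metric.closedBall (0 : Euc N) (Real.sqrt N) := by
        simpa [Metric.mem_closedBall, dist_eq_norm] using hy
      exact le_trans (hb hmem) (ha hmem)
    linarith
  · intro x z
    obtain ⟨y1, hy1, hf1⟩ := periodic_reduce x
    obtain ⟨y2, hy2, hf2⟩ := periodic_reduce z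
    have h1 : f x ≤ f a := by
      rw [hf1 f hp]
      exact ha (by simpa [Metric.mem_closedBall, dist_eq_norm] using hy1)
    have h2 : f b ≤ f z := by
      rw [hf2 f hp]
      exact hb (by simpa [Metric.mem_closedBall, dist_eq_norm] using hy2)
    linarith

lemma H_lower {N m : ℕ} (H : Fin m → Euc N → Euc N → ℝ) (α : ℝ → ℝ)
    (hcont : ∀ i, Continuous fun q : Euc N × Euc N => H i q.1 q.2)
    (hper : ∀ i p, ZPeriodic fun x => H i x p)
    (hcoer : ∀ i x p, α ‖p‖ ≤ H i x p)
    (hα : Filter.Tendsto α Filter.atTop Filter.atTop) :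
    ∃ A : ℝ, ∀ i x p, A ≤ H i x p := by
  obtain ⟨r₀, hr₀⟩ := (hα.eventually_ge_atTop 0).exists_forall_of_atTop
  set r₁ : ℝ := max r₀ 0 with hr₁def
  have key : ∀ i : Fin m, ∃ Ai : ℝ, ∀ x p, Ai ≤ H i x p := by
    intro i
    set K := (Metric.closedBall (0 : Euc N) (Real.sqrt N)) ×ˢ
      (Metric.closedBall (0 : Euc N) r₁) with hKdef
    have hK : IsCompact K := (isCompact_closedBall _ _).prod (isCompact_closedBall _ _)
    have hne : K.Nonempty := ⟨(0, 0), by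
      constructor <;> simp [Real.sqrt_nonneg, hr₁def]⟩
    obtain ⟨q0, -, hmin⟩ := hK.exists_isMinOn hne (hcont i).continuousOn
    refine ⟨min (H i q0.1 q0.2) 0, ?_⟩
    intro x p
    by_cases hp : ‖p‖ ≤ r₁
    · obtain ⟨y, hy, hfy⟩ := periodic_reduce x
      have hmem : (y, p) ∈ K := by
        constructor <;> simp [Metric.mem_closedBall, dist_eq_norm, hy, hp]
      have : H i x p = H i y p := hfy (fun x => H i x p) (hper i p)
      calc min (H i q0.1 q0.2) 0 ≤ H i q0.1 q0.2 := min_le_left _ _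
        _ ≤ H i y p := hmin hmem
        _ = H i x p := this.symm
    · push_neg at hp
      have : (0:ℝ) ≤ α ‖p‖ := hr₀ ‖p‖ (le_trans (le_max_left _ _) hp.le)
      calc min (H i q0.1 q0.2) 0 ≤ 0 := min_le_right _ _
        _ ≤ H i x p := le_trans this (hcoer i x p)
  choose Ai hAi using key
  rcases isEmpty_or_nonempty (Fin m) with hE | hNE
  · exact ⟨0, fun i => (hE.false i).elim⟩
  · refine ⟨Finset.univ.inf' (Finset.univ_nonempty) Ai, fun i x p => ?_⟩
    exact le_trans (Finset.inf'_le _ (Finset.mem_univ i)) (hAi i x p)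

lemma exists_superdiff_near {N : ℕ} {u : Euc N → ℝ} (hc : Continuous u)
    {C : ℝ} (hC : ∀ z z' : Euc N, u z - u z' ≤ C)
    (x : Euc N) {ρ : ℝ} (hρ : 0 < ρ) :
    ∃ z p : Euc N, ‖z - x‖ < ρ ∧ InSuperDiff u z p := by
  have hC0 : 0 ≤ C := by have := hC x x; linarith
  set k : ℝ := (C + 1) / ρ ^ 2 with hk
  have hkpos : 0 < k := by positivity
  set g : Euc N → ℝ := fun z => u z - k * ‖z - x‖ ^ 2 with hg
  have hgc : Continuous g := by
    apply hc.sub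
    exact (continuous_const.mul (((continuous_id.sub continuous_const).norm).pow 2))
  obtain ⟨z, hzmem, hzmax⟩ := (isCompact_closedBall x ρ).exists_isMaxOn
    ⟨x, Metric.mem_closedBall_self hρ.le⟩ hgc.continuousOn
  have hgx : g x = u x := by simp [hg]
  have hxmem : x ∈ Metric.closedBall x ρ := Metric.mem_closedBall_self hρ.le
  have hxz : g x ≤ g z := hzmax hxmem
  have hzlt : ‖z - x‖ < ρ := by
    by_contra hge
    push_neg at hge
    have hzx : ‖z - x‖ ≤ ρ := by
      simpa [dist_eq_norm] using Metric.mem_closedBall.mp hzmem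
    have : g z ≤ u x + C - k * ρ ^ 2 := by
      have h1 : u z - u x ≤ C := hC z x
      have h2 : k * ρ ^ 2 ≤ k * ‖z - x‖ ^ 2 := by
        apply mul_le_mul_of_nonneg_left _ hkpos.le
        exact pow_le_pow_left₀ hρ.le hge 2
      simp only [hg]; linarith
    have hkr : k * ρ ^ 2 = C + 1 := by rw [hk, div_mul_cancel₀ _ (by positivity)]
    rw [hkr] at this
    rw [hgx] at hxz
    linarith
  refine ⟨z, (2 * k) • (z - x), hzlt, ?_⟩
  intro ε hε
  refine ⟨min (ε / k) (ρ - ‖z - x‖), lt_min (by positivity) (by linarith), ?_⟩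
  intro y hy
  have hy1 : ‖y - z‖ < ε / k := lt_of_lt_of_le (by simpa [dist_eq_norm] using hy) (min_le_left _ _)
  have hy2 : ‖y - z‖ < ρ - ‖z - x‖ :=
    lt_of_lt_of_le (by simpa [dist_eq_norm] using hy) (min_le_right _ _)
  have hymem : y ∈ Metric.closedBall x ρ := by
    have : ‖y - x‖ ≤ ‖y - z‖ + ‖z - x‖ := by
      simpa using norm_add_le (y - z) (z - x)
    simp only [Metric.mem_closedBall, dist_eq_norm]
    linarith
  have hmax : g y ≤ g z := hzmax hymem
  have hexp : ‖y - x‖ ^ 2 = ‖y - z‖ ^ 2 + 2 * ⟪z - x, y - z⟫ + ‖z - x‖ ^ 2 := by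
    have : y - x = (y - z) + (z - x) := by abel
    rw [this, norm_add_sq_real]
    rw [real_inner_comm]
  have hinner : ⟪(2 * k) • (z - x), y - z⟫ = 2 * k * ⟪z - x, y - z⟫ := real_inner_smul_left _ _ _
  have hukey : u y - u z - ⟪(2 * k) • (z - x), y - z⟫ ≤ k * ‖y - z‖ ^ 2 := by
    simp only [hg] at hmax
    rw [hinner]
    nlinarith [hmax, hexp]
  calc u y - u z - ⟪(2 * k) • (z - x), y - z⟫ ≤ k * ‖y - z‖ ^ 2 := hukey
    _ = (k * ‖y - z‖) * ‖y - z‖ := by ring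
    _ ≤ ε * ‖y - z‖ := by
        apply mul_le_mul_of_nonneg_right _ (norm_nonneg _)
        have := (lt_div_iff₀ hkpos).mp hy1
        linarith
    _ = ε * dist y z := by rw [dist_eq_norm]

variable {m : ℕ} (B : Matrix (Fin m) (Fin m) ℝ)

def negPairs : Finset (Fin m × Fin m) :=
  Finset.univ.filter fun ij => B ij.1 ij.2 < 0

def bmin : ℝ :=
  if h : (negPairs B).Nonempty then (negPairs B).inf' h (fun ij => -B ij.1 ij.2) else 1

def Ssum : ℝ := ∑ i, ∑ k, |B i k|

def Kseq : ℕ → ℝ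
  | 0 => 0
  | (r+1) => Kseq r + (1 + Ssum B * Kseq r) / bmin B

lemma bmin_pos : 0 < bmin B := by
  unfold bmin
  split_ifs with h
  · rw [Finset.lt_inf'_iff]
    intro ij hij
    simp only [negPairs, Finset.mem_filter] at hij
    linarith [hij.2]
  · norm_num

lemma Ssum_nonneg : 0 ≤ Ssum B := by
  apply Finset.sum_nonneg; intro i _
  apply Finset.sum_nonneg; intro k _
  exact abs_nonneg _

lemma Kseq_nonneg : ∀ r, 0 ≤ Kseq B r := by
  intro r
  induction r with
  | zero => simp [Kseq]
  | succ r ih =>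
    have h1 : (0:ℝ) ≤ (1 + Ssum B * Kseq B r) / bmin B := by
      apply div_nonneg _ (bmin_pos B).le
      nlinarith [Ssum_nonneg B]
    simp only [Kseq]; linarith

lemma Kseq_mono {r s : ℕ} (h : r ≤ s) : Kseq B r ≤ Kseq B s := by
  induction s with
  | zero => simp_all
  | succ s ih =>
    rcases Nat.lt_or_ge r (s+1) with h' | h'
    · have := ih (Nat.lt_succ_iff.mp h')
      have h1 : (0:ℝ) ≤ (1 + Ssum B * Kseq B s) / bmin B := by
        apply div_nonneg _ (bmin_pos B).le
        nlinarith [Ssum_nonneg B, Kseq_nonneg B s]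
      simp only [Kseq]; linarith
    · have : r = s + 1 := le_antisymm h h'
      simp [this]

lemma sum_shift (hrow : ∀ i, ∑ j, B i j = 0) (w : Fin m → ℝ) (i : Fin m) :
    ∑ k, B i k * (w k - w i) = B.mulVec w i := by
  simp only [mul_sub, Finset.sum_sub_distrib, ← Finset.sum_mul, hrow i,
    Matrix.mulVec, dotProduct]
  ring

lemma osc_of_mulVec_le (hm : 1 ≤ m)
    (hoff : ∀ i j, i ≠ j → B i j ≤ 0)
    (hrow : ∀ i, ∑ j, B i j = 0)
    (hirr : ∀ I : Finset (Fin m), I.Nonempty → I ≠ Finset.univ →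
      ∃ i ∈ I, ∃ j, j ∉ I ∧ B i j ≠ 0)
    {E : ℝ} (hE : 0 ≤ E) (w : Fin m → ℝ) (hw : ∀ i, B.mulVec w i ≤ E) :
    ∀ i j, w i - w j ≤ Kseq B m * E := by
  haveI : Nonempty (Fin m) := ⟨⟨0, hm⟩⟩
  obtain ⟨i₀, hi₀⟩ := Finite.exists_max w
  have hconstr : ∀ i, ∑ k, B i k * (w k - w i) ≤ E := by
    intro i
    rw [sum_shift B hrow w i]; exact hw i
  have main : ∀ r : ℕ, ∃ I : Finset (Fin m), i₀ ∈ I ∧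
      (∀ i ∈ I, w i₀ - w i ≤ Kseq B r * E) ∧ (I = Finset.univ ∨ r ≤ I.card) := by
    intro r
    induction r with
    | zero =>
      refine ⟨{i₀}, Finset.mem_singleton_self _, ?_, Or.inr (Nat.zero_le _)⟩
      intro i hi
      rw [Finset.mem_singleton] at hi
      subst hi
      simp [Kseq]
    | succ r ih =>
      obtain ⟨I, hi₀I, hIb, hIc⟩ := ih
      have hmono : ∀ i ∈ I, w i₀ - w i ≤ Kseq B (r+1) * E := by
        intro i hi
        exact le_trans (hIb i hi) (mul_le_mul_of_nonneg_right (Kseq_mono B (Nat.le_succ r)) hE)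
      by_cases hU : I = Finset.univ
      · exact ⟨I, hi₀I, hmono, Or.inl hU⟩
      obtain ⟨i, hiI, j, hjI, hBij⟩ := hirr I ⟨i₀, hi₀I⟩ hU
      have hij : i ≠ j := fun h => hjI (h ▸ hiI)
      have hBij' : B i j < 0 := lt_of_le_of_ne (hoff i j hij) hBij
      set t : ℝ := Kseq B r * E with ht
      have ht0 : 0 ≤ t := mul_nonneg (Kseq_nonneg B r) hE
      have h1 : ∀ k, w k - w i ≤ t := by
        intro k
        have := hIb i hiI
        have := hi₀ k
        linarith
      have hsplit : ∑ k ∈ Finset.univ.erase j, B i k * (w k - w i) + B i j * (w j - w i)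
          = ∑ k, B i k * (w k - w i) := Finset.sum_erase_add _ _ (Finset.mem_univ j)
      have hterm : ∀ k ∈ Finset.univ.erase j, -(|B i k| * t) ≤ B i k * (w k - w i) := by
        intro k hk
        by_cases hki : k = i
        · rw [hki, sub_self, mul_zero]
          exact neg_nonpos.mpr (mul_nonneg (abs_nonneg _) ht0)
        · have hBik : B i k ≤ 0 := hoff i k (fun h => hki h.symm)
          have : B i k * t ≤ B i k * (w k - w i) := by
            apply mul_le_mul_of_nonpos_left (h1 k) hBik
          have habs : -(|B i k| * t) = B i k * t := by
            rw [abs_of_nonpos hBik]; ring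
          linarith
      have hsum_lb : -(Ssum B * t) ≤ ∑ k ∈ Finset.univ.erase j, B i k * (w k - w i) := by
        have h2 : ∑ k ∈ Finset.univ.erase j, -(|B i k| * t)
            ≤ ∑ k ∈ Finset.univ.erase j, B i k * (w k - w i) :=
          Finset.sum_le_sum hterm
        have h3 : ∑ k ∈ Finset.univ.erase j, -(|B i k| * t)
            = -((∑ k ∈ Finset.univ.erase j, |B i k|) * t) := by
          rw [Finset.sum_neg_distrib, ← Finset.sum_mul]
        have h4 : ∑ k ∈ Finset.univ.erase j, |B i k| ≤ Ssum B := by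
          calc ∑ k ∈ Finset.univ.erase j, |B i k| ≤ ∑ k, |B i k| :=
                Finset.sum_le_sum_of_subset_of_nonneg (Finset.erase_subset _ _)
                  (fun k _ _ => abs_nonneg _)
            _ ≤ Ssum B := Finset.single_le_sum (f := fun i' => ∑ k, |B i' k|)
                (fun i' _ => Finset.sum_nonneg fun k _ => abs_nonneg _) (Finset.mem_univ i)
        nlinarith
      have hkey : (-B i j) * (w i - w j) ≤ E + Ssum B * t := by
        have := hconstr i
        nlinarith
      have hwij : w i - w j ≤ (E + Ssum B * t) / bmin B := by
        rcases le_or_gt (w i - w j) 0 with hle | hgt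
        · apply le_trans hle
          apply div_nonneg _ (bmin_pos B).le
          nlinarith [Ssum_nonneg B]
        · have hmem : (i, j) ∈ negPairs B := by
            simp [negPairs, hBij']
          have hble : bmin B ≤ -B i j := by
            unfold bmin
            rw [dif_pos ⟨(i,j), hmem⟩]
            exact Finset.inf'_le _ hmem
          rw [le_div_iff₀ (bmin_pos B)]
          nlinarith
      refine ⟨insert j I, Finset.mem_insert_of_mem hi₀I, ?_, ?_⟩
      · intro i' hi'
        rcases Finset.mem_insert.mp hi' with h | h
        · subst h
          have : w i₀ - w i' ≤ (w i₀ - w i) + (w i - w i') := by linarith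
          have hKs : Kseq B (r+1) * E = t + (E + Ssum B * t) / bmin B := by
            rw [show Kseq B (r+1) = Kseq B r + (1 + Ssum B * Kseq B r) / bmin B from rfl, ht]
            have hb := (bmin_pos B).ne'
            field_simp
          rw [hKs]
          have := hIb i hiI
          linarith [hwij]
        · exact hmono i' h
      · right
        rw [Finset.card_insert_of_notMem hjI]
        rcases hIc with h | h
        · exact absurd h hU
        · omega
  obtain ⟨I, hi₀I, hIb, hIc⟩ := main m
  have hIuniv : I = Finset.univ := by
    rcases hIc with h | h
    · exact h
    · apply Finset.eq_univ_of_card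
      have := Finset.card_le_univ I
      simp only [Finset.card_univ, Fintype.card_fin] at this
      simp only [Fintype.card_fin]
      omega
  intro i j
  have h1 : w i₀ - w j ≤ Kseq B m * E := hIb j (hIuniv ▸ Finset.mem_univ j)
  have h2 : w i ≤ w i₀ := hi₀ i
  linarith

set_option maxHeartbeats 1000000 in
lemma lipschitz_of_superdiff_bound {N : ℕ} {u : Euc N → ℝ} (hc : Continuous u)
    {C : ℝ} (hC : ∀ z z' : Euc N, u z - u z' ≤ C) {R : ℝ} (hR : 0 ≤ R)
    (hgrad : ∀ x p : Euc N, InSuperDiff u x p → ‖p‖ ≤ R) :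
    ∀ y z : Euc N, u z - u y ≤ R * ‖z - y‖ := by
  intro y z₀
  have hC0 : 0 ≤ C := by have := hC y y; linarith
  apply le_of_forall_pos_le_add
  intro ν hν
  obtain ⟨η, hη, hη3⟩ : ∃ η : ℝ, 0 < η ∧ 3 * η ≤ ν := ⟨ν/3, by positivity, by linarith⟩
  obtain ⟨ε', hε'0, hε'b⟩ : ∃ ε' : ℝ, 0 < ε' ∧ ε' * ‖z₀ - y‖ ≤ η := by
    refine ⟨η / (‖z₀ - y‖ + 1), by positivity, ?_⟩
    rw [div_mul_eq_mul_div, div_le_iff₀ (by positivity)]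
    nlinarith [norm_nonneg (z₀ - y)]
  obtain ⟨R', hR'0, hRR', hR'def⟩ : ∃ R' : ℝ, 0 < R' ∧ R < R' ∧ R' = R + ε' :=
    ⟨R + ε', by positivity, by linarith, rfl⟩
  obtain ⟨D, hD, hDdef⟩ : ∃ D : ℝ, 0 < D ∧ D = R'^2 - R^2 :=
    ⟨R'^2 - R^2, by nlinarith, rfl⟩
  have hsD : 0 < Real.sqrt D := Real.sqrt_pos.mpr hD
  obtain ⟨γ, hγ0, hγdef⟩ : ∃ γ : ℝ, 0 ≤ γ ∧ γ = R / Real.sqrt D :=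
    ⟨R / Real.sqrt D, div_nonneg hR hsD.le, rfl⟩
  obtain ⟨δc, hδc, hcont⟩ := Metric.continuous_iff.mp hc y η hη
  obtain ⟨σ, hσ, hση, hσγ⟩ : ∃ σ : ℝ, 0 < σ ∧ R' * σ ≤ η ∧ σ * γ < δc := by
    refine ⟨min (η/R') (δc/(γ+1)) / 2, ?_, ?_, ?_⟩
    · positivity
    · have h1 : min (η/R') (δc/(γ+1)) / 2 ≤ η/R' := by
        have h2 := min_le_left (η/R') (δc/(γ+1))
        have h3 : 0 < min (η/R') (δc/(γ+1)) := lt_min (by positivity) (by positivity)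
        linarith
      calc R' * (min (η/R') (δc/(γ+1)) / 2) ≤ R' * (η/R') :=
            mul_le_mul_of_nonneg_left h1 hR'0.le
        _ = η := by field_simp
    · have h2 : min (η/R') (δc/(γ+1)) / 2 ≤ (δc/(γ+1))/2 := by
        have := min_le_right (η/R') (δc/(γ+1)); linarith
      have h4 : (δc/(γ+1)) * (γ+1) = δc := div_mul_cancel₀ _ (by positivity)
      have h5 : 0 < min (η/R') (δc/(γ+1)) / 2 := by positivity
      nlinarith
  obtain ⟨ρ, hρ0, hρ1, hρz₀⟩ : ∃ ρ : ℝ, 0 < ρ ∧ C/R' + σ + 1 ≤ ρ ∧ ‖z₀ - y‖ ≤ ρ :=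
    ⟨max (C/R' + σ + 1) ‖z₀ - y‖, lt_max_of_lt_left (by positivity),
      le_max_left _ _, le_max_right _ _⟩
  set G : Euc N → ℝ := fun z => u z - R' * Real.sqrt (‖z - y‖^2 + σ^2) with hGdef
  have hGc : Continuous G := by
    apply hc.sub
    apply continuous_const.mul
    exact Real.continuous_sqrt.comp ((((continuous_id.sub continuous_const).norm).pow 2).add
      continuous_const)
  obtain ⟨zb, hzbmem, hzbmax⟩ := (isCompact_closedBall y ρ).exists_isMaxOn
    ⟨y, Metric.mem_closedBall_self hρ0.le⟩ hGc.continuousOn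
  obtain ⟨s, hs0', hs, hsdef⟩ : ∃ s : ℝ, 0 ≤ s ∧ σ ≤ s ∧
      s = Real.sqrt (‖zb - y‖^2 + σ^2) := by
    refine ⟨Real.sqrt (‖zb - y‖^2 + σ^2), Real.sqrt_nonneg _, ?_, rfl⟩
    have h0 := Real.sqrt_le_sqrt (show σ^2 ≤ ‖zb - y‖^2 + σ^2 by nlinarith [norm_nonneg (zb - y)])
    rwa [Real.sqrt_sq hσ.le] at h0
  have hs0 : 0 < s := lt_of_lt_of_le hσ hs
  have hssq : s^2 = ‖zb - y‖^2 + σ^2 := by rw [hsdef]; exact Real.sq_sqrt (by positivity)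
  have hGy : G y = u y - R' * σ := by
    simp only [hGdef, sub_self, norm_zero]
    rw [show (0:ℝ)^2 + σ^2 = σ^2 by ring, Real.sqrt_sq hσ.le]
  have hGyzb : G y ≤ G zb := hzbmax (Metric.mem_closedBall_self hρ0.le)
  have hzbρ : ‖zb - y‖ < ρ := by
    by_contra hge
    push_neg at hge
    have h1 : ρ ≤ Real.sqrt (‖zb - y‖^2 + σ^2) := by
      calc ρ = Real.sqrt (ρ^2) := (Real.sqrt_sq hρ0.le).symm
        _ ≤ _ := Real.sqrt_le_sqrt (by nlinarith)
    have h2 : G zb ≤ u y + C - R' * ρ := by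
      have h2a := hC zb y
      have h3 : R' * ρ ≤ R' * Real.sqrt (‖zb - y‖^2 + σ^2) :=
        mul_le_mul_of_nonneg_left h1 hR'0.le
      simp only [hGdef]; linarith
    have h4 : C/R' + σ < ρ := by linarith
    have h5 : C + R' * σ < R' * ρ := by
      have := (div_lt_iff₀ hR'0).mp (show C/R' < ρ - σ by linarith)
      nlinarith
    rw [hGy] at hGyzb
    linarith
  obtain ⟨p, hpdef⟩ : ∃ p : Euc N, p = (R'/s) • (zb - y) := ⟨_, rfl⟩
  have hsuper : InSuperDiff u zb p := by
    intro ε hε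
    refine ⟨min (2*σ*ε/R') (ρ - ‖zb - y‖), lt_min (by positivity) (by linarith), ?_⟩
    intro w hw
    have hw1 : ‖w - zb‖ < 2*σ*ε/R' :=
      lt_of_lt_of_le (by simpa [dist_eq_norm] using hw) (min_le_left _ _)
    have hw2 : ‖w - zb‖ < ρ - ‖zb - y‖ :=
      lt_of_lt_of_le (by simpa [dist_eq_norm] using hw) (min_le_right _ _)
    have hwmem : w ∈ Metric.closedBall y ρ := by
      have : ‖w - y‖ ≤ ‖w - zb‖ + ‖zb - y‖ := by
        simpa using norm_add_le (w - zb) (zb - y)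
      simp only [Metric.mem_closedBall, dist_eq_norm]
      linarith
    have hmax : G w ≤ G zb := hzbmax hwmem
    have hsqrt : Real.sqrt (‖w - y‖^2 + σ^2)
        ≤ s + (2*⟪zb - y, w - zb⟫ + ‖w - zb‖^2)/(2*s) := by
      have h1 := sqrt_le_add (‖w - y‖^2 + σ^2) s (by positivity) hs0
      have h2 : ‖w - y‖^2 = ‖w - zb‖^2 + 2*⟪zb - y, w - zb⟫ + ‖zb - y‖^2 := by
        have h3 : w - y = (w - zb) + (zb - y) := by abel
        rw [h3, norm_add_sq_real, real_inner_comm]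
      have h5 : (‖w - y‖^2 + σ^2) - s^2 = 2*⟪zb - y, w - zb⟫ + ‖w - zb‖^2 := by
        rw [h2, hssq]; ring
      rw [h5] at h1
      exact h1
    have hinner : ⟪p, w - zb⟫ = (R'/s) * ⟪zb - y, w - zb⟫ := by
      rw [hpdef]; exact real_inner_smul_left _ _ _
    have hmain : u w - u zb - ⟪p, w - zb⟫ ≤ (R'/(2*s)) * ‖w - zb‖^2 := by
      have h7 : u w - R' * Real.sqrt (‖w - y‖^2 + σ^2)
          ≤ u zb - R' * s := by simp only [hGdef] at hmax; rw [← hsdef] at hmax; exact hmax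
      have h6 : R' * Real.sqrt (‖w - y‖^2 + σ^2)
          ≤ R' * s + (R'/s) * ⟪zb - y, w - zb⟫ + (R'/(2*s)) * ‖w - zb‖^2 := by
        calc R' * Real.sqrt (‖w - y‖^2 + σ^2)
            ≤ R' * (s + (2*⟪zb - y, w - zb⟫ + ‖w - zb‖^2)/(2*s)) :=
              mul_le_mul_of_nonneg_left hsqrt hR'0.le
          _ = R' * s + (R'/s) * ⟪zb - y, w - zb⟫ + (R'/(2*s)) * ‖w - zb‖^2 := by
              field_simp; ring
      rw [hinner]
      linarith
    calc u w - u zb - ⟪p, w - zb⟫ ≤ (R'/(2*s)) * ‖w - zb‖^2 := hmain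
      _ = ((R'/(2*s)) * ‖w - zb‖) * ‖w - zb‖ := by ring
      _ ≤ ε * ‖w - zb‖ := by
          apply mul_le_mul_of_nonneg_right _ (norm_nonneg _)
          have h8 : (R'/(2*s)) * ‖w - zb‖ ≤ (R'/(2*σ)) * ‖w - zb‖ := by
            apply mul_le_mul_of_nonneg_right _ (norm_nonneg _)
            apply div_le_div_of_nonneg_left hR'0.le (by positivity) (by linarith)
          have h9 : (R'/(2*σ)) * ‖w - zb‖ ≤ ε := by
            rw [div_mul_eq_mul_div, div_le_iff₀ (by positivity)]
            have := (lt_div_iff₀ hR'0).mp hw1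
            nlinarith
          linarith
      _ = ε * dist w zb := by rw [dist_eq_norm]
  have hpnorm : ‖p‖ ≤ R := hgrad zb p hsuper
  have hzby : ‖zb - y‖ ≤ γ * σ := by
    have h1 : ‖p‖ = (R'/s) * ‖zb - y‖ := by
      rw [hpdef, norm_smul, Real.norm_eq_abs, abs_of_pos (by positivity)]
    have h2 : R' * ‖zb - y‖ ≤ R * s := by
      rw [h1, div_mul_eq_mul_div, div_le_iff₀ hs0] at hpnorm
      exact hpnorm
    have h3 : (R')^2 * ‖zb - y‖^2 ≤ R^2 * (‖zb - y‖^2 + σ^2) := by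
      nlinarith [pow_le_pow_left₀ (mul_nonneg hR'0.le (norm_nonneg (zb - y))) h2 2, hssq]
    have h5 : ‖zb - y‖^2 * D ≤ R^2 * σ^2 := by rw [hDdef]; nlinarith
    have h6 : ‖zb - y‖ * Real.sqrt D ≤ R * σ := by
      have h7 : (‖zb - y‖ * Real.sqrt D)^2 ≤ (R * σ)^2 := by
        have hDs : (Real.sqrt D)^2 = D := Real.sq_sqrt hD.le
        nlinarith
      calc ‖zb - y‖ * Real.sqrt D = Real.sqrt ((‖zb - y‖ * Real.sqrt D)^2) :=
            (Real.sqrt_sq (by positivity)).symm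
        _ ≤ Real.sqrt ((R * σ)^2) := Real.sqrt_le_sqrt h7
        _ = R * σ := Real.sqrt_sq (by positivity)
    rw [hγdef, div_mul_eq_mul_div, le_div_iff₀ hsD]
    linarith
  have hzbclose : dist zb y < δc := by
    rw [dist_eq_norm]
    calc ‖zb - y‖ ≤ γ * σ := hzby
      _ = σ * γ := by ring
      _ < δc := hσγ
  have huzb : u zb < u y + η := by
    have h1 := hcont zb hzbclose
    rw [Real.dist_eq] at h1
    have h2 := abs_lt.mp h1
    linarith [h2.1, h2.2]
  have hGz₀ : G z₀ ≤ G zb := hzbmax (by simp [Metric.mem_closedBall, dist_eq_norm, hρz₀])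
  have h1 : u z₀ ≤ u zb + R' * Real.sqrt (‖z₀ - y‖^2 + σ^2) - R' * s := by
    simp only [hGdef] at hGz₀; rw [← hsdef] at hGz₀; linarith
  have h2 : Real.sqrt (‖z₀ - y‖^2 + σ^2) ≤ ‖z₀ - y‖ + σ :=
    sqrt_sq_add_sq_le _ _ (norm_nonneg _) hσ.le
  have h3 : R' * Real.sqrt (‖z₀ - y‖^2 + σ^2) ≤ R' * ‖z₀ - y‖ + R' * σ := by nlinarith
  have h5 : R' * ‖z₀ - y‖ = R * ‖z₀ - y‖ + ε' * ‖z₀ - y‖ := by rw [hR'def]; ring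
  have h7 : 0 < R' * s := by positivity
  have h8 : 0 ≤ R * ‖z₀ - y‖ := mul_nonneg hR (norm_nonneg _)
  linarith

end SubsolEquiLip

open SubsolEquiLip
set_option maxHeartbeats 1000000

/-- Subsolutions of `Bu + H(x,Du) = c𝟙` are equi-Lipschitz, with a constant depending only on
`c`, the Hamiltonians and the coupling matrix. -/
theorem subsolutions_equiLipschitz
    {N m : ℕ} (hN : 1 ≤ N) (hm : 1 ≤ m)
    (H : Fin m → Euc N → Euc N → ℝ) (B : Matrix (Fin m) (Fin m) ℝ) (α β : ℝ → ℝ)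
    (hst : Standing H B α β)
    (hα : Tendsto α atTop atTop) (hβ : Tendsto β atTop atTop)
    :
    ∀ c : ℝ, ∃ κ : NNReal, ∀ u : Fin m → Euc N → ℝ, IsSubsol H B 0 c u →
      ∀ i : Fin m, LipschitzWith κ (u i) := by
  obtain ⟨hHc, hHper, hconv, hpinch, hoff, hrow, hirr⟩ := hst
  have hcoer : ∀ i x p, α ‖p‖ ≤ H i x p := fun i x p => (hpinch i x p).1
  intro c
  obtain ⟨A, hA⟩ := H_lower H α hHc hHper hcoer hα
  obtain ⟨E, hE0, hEc⟩ : ∃ E : ℝ, 0 ≤ E ∧ c - A ≤ E :=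
    ⟨max (c - A) 0, le_max_right _ _, le_max_left _ _⟩
  obtain ⟨Θ, hΘ0, hΘdef⟩ : ∃ Θ : ℝ, 0 ≤ Θ ∧ Θ = Kseq B m * E :=
    ⟨Kseq B m * E, mul_nonneg (Kseq_nonneg B m) hE0, rfl⟩
  obtain ⟨r₂, hr₂⟩ := (hα.eventually_ge_atTop (c + Ssum B * Θ + 1)).exists_forall_of_atTop
  obtain ⟨R, hR0, hRr₂⟩ : ∃ R : ℝ, 0 ≤ R ∧ r₂ ≤ R := ⟨max r₂ 0, le_max_right _ _, le_max_left _ _⟩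
  refine ⟨R.toNNReal, ?_⟩
  intro u hu i
  obtain ⟨huc, hup, husub⟩ := hu
  have hCex : ∀ j, ∃ C : ℝ, 0 ≤ C ∧ ∀ x z : Euc N, u j x - u j z ≤ C :=
    fun j => bounded_of_periodic (huc j) (hup j)
  choose Cu hCu0 hCub using hCex
  -- Step 1: the coupling term is bounded above everywhere.
  have hcoupling : ∀ (x : Euc N) (j : Fin m), B.mulVec (fun k => u k x) j ≤ E := by
    intro x j
    have hkey : B.mulVec (fun k => u k x) j ≤ c - A := by
      by_contra hlt
      push_neg at hlt
      have hFc : Continuous (fun z => B.mulVec (fun k => u k z) j) := by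
        have heq : (fun z => B.mulVec (fun k => u k z) j)
            = fun z => ∑ k, B j k * u k z := by
          funext z; simp [Matrix.mulVec, dotProduct]
        rw [heq]
        exact continuous_finset_sum _ (fun k _ => continuous_const.mul (huc k))
      obtain ⟨δ, hδ, hball⟩ := Metric.mem_nhds_iff.mp
        (hFc.continuousAt.preimage_mem_nhds (Ioi_mem_nhds hlt))
      obtain ⟨z, p, hz, hp⟩ := exists_superdiff_near (huc j) (hCub j) x hδ
      have h2 : c - A < B.mulVec (fun k => u k z) j :=
        hball (by simp [Metric.mem_ball, dist_eq_norm, hz])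
      have h3 := husub z j p hp
      have h4 := hA j z p
      have h5 : (0:ℝ) * u j z = 0 := zero_mul _
      rw [h5] at h3
      linarith
    linarith
  -- Step 2: uniform oscillation bound between components.
  have hosc : ∀ (x : Euc N) (j k : Fin m), u j x - u k x ≤ Θ := by
    intro x j k
    rw [hΘdef]
    exact osc_of_mulVec_le B hm hoff hrow hirr hE0 (fun k => u k x)
      (fun j => hcoupling x j) j k
  -- Step 3: uniform bound on superdifferentials.
  have hgrad : ∀ x p : Euc N, InSuperDiff (u i) x p → ‖p‖ ≤ R := by
    intro x p hp
    by_contra hgt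
    push_neg at hgt
    have h1 : c + Ssum B * Θ + 1 ≤ α ‖p‖ := hr₂ _ (le_trans hRr₂ hgt.le)
    have h2 : α ‖p‖ ≤ H i x p := hcoer i x p
    have h3 := husub x i p hp
    have h5 : (0:ℝ) * u i x = 0 := zero_mul _
    rw [h5] at h3
    have h4 : -(Ssum B * Θ) ≤ B.mulVec (fun k => u k x) i := by
      rw [← sum_shift B hrow (fun k => u k x) i]
      have hterm : ∀ k ∈ Finset.univ, -(|B i k| * Θ) ≤ B i k * (u k x - u i x) := by
        intro k _
        have ha : |B i k * (u k x - u i x)| ≤ |B i k| * Θ := by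
          rw [abs_mul]
          apply mul_le_mul_of_nonneg_left _ (abs_nonneg _)
          rw [abs_le]
          constructor
          · have := hosc x i k; linarith
          · exact hosc x k i
        have hb := neg_abs_le (B i k * (u k x - u i x))
        linarith
      have hrowS : ∑ k, |B i k| ≤ Ssum B := Finset.single_le_sum
        (f := fun i' => ∑ k, |B i' k|)
        (fun i' _ => Finset.sum_nonneg fun k _ => abs_nonneg _) (Finset.mem_univ i)
      calc -(Ssum B * Θ) ≤ -((∑ k, |B i k|) * Θ) := by nlinarith
        _ = ∑ k, -(|B i k| * Θ) := by rw [Finset.sum_neg_distrib, ← Finset.sum_mul]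
        _ ≤ ∑ k, B i k * (u k x - u i x) := Finset.sum_le_sum hterm
    linarith
  -- Step 4: Lipschitz continuity.
  have hlip := lipschitz_of_superdiff_bound (huc i) (hCub i) hR0 hgrad
  apply LipschitzWith.of_dist_le_mul
  intro x y
  rw [Real.dist_eq, dist_eq_norm, Real.coe_toNNReal R hR0]
  rw [abs_le]
  constructor
  · have := hlip x y
    rw [norm_sub_rev (y:Euc N) x] at this
    linarith
  · have := hlip y x
    linarith
end
end

section
/- Let λ > 0 and c ∈ ℝ. If v and u are continuous functions from M to ℝ^m that are respectively a viscosity subsolution and a viscosity supersolution of (B + λId)u + H(x, Du) = c𝟙, then v_i(x) ≤ u_i(x) for every x ∈ M and every i ∈ {1,…,m}. -/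
open scoped RealInnerProductSpace
open Filter MeasureTheory Set

noncomputable section

section AuxComparison

variable {N m : ℕ}

/-- The compact "fundamental domain". -/
def K0 (N : ℕ) : Set (Euc N) := {z | ∀ i, |z i| ≤ 1}

lemma coord_apply (k : Fin N → ℤ) (i : Fin N) :
    ((WithLp.equiv 2 (Fin N → ℝ)).symm (fun j => (k j : ℝ))) i = (k i : ℝ) := rfl

lemma exists_shift (x : Euc N) : ∃ k : Fin N → ℤ,
    x - (WithLp.equiv 2 (Fin N → ℝ)).symm (fun j => ((k j : ℤ) : ℝ)) ∈ K0 N := by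
  refine ⟨fun i => ⌊x i⌋, fun i => ?_⟩
  have h1 : (x - (WithLp.equiv 2 (Fin N → ℝ)).symm (fun j => ((⌊x j⌋ : ℤ) : ℝ))) i
      = x i - ⌊x i⌋ := by simp [coord_apply]
  rw [h1, abs_le]
  constructor
  · linarith [Int.floor_le (x i), Int.lt_floor_add_one (x i)]
  · linarith [Int.floor_le (x i), Int.lt_floor_add_one (x i)]

lemma periodic_shift {f : Euc N → ℝ} (hf : ZPeriodic f) (x : Euc N) (k : Fin N → ℤ) :
    f (x - (WithLp.equiv 2 (Fin N → ℝ)).symm (fun j => ((k j : ℤ) : ℝ))) = f x := by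
  have h := hf (x - (WithLp.equiv 2 (Fin N → ℝ)).symm (fun j => ((k j : ℤ) : ℝ))) k
  rw [sub_add_cancel] at h
  exact h.symm

lemma norm_le_of_mem_K0 {z : Euc N} (hz : z ∈ K0 N) : ‖z‖ ≤ N + 1 := by
  have h1 : ‖z‖ ≤ Real.sqrt N := by
    rw [EuclideanSpace.norm_eq]
    apply Real.sqrt_le_sqrt
    calc ∑ i, ‖z i‖ ^ 2 ≤ ∑ _i : Fin N, (1:ℝ) := by
          apply Finset.sum_le_sum; intro i _
          have h2 := hz i
          rw [Real.norm_eq_abs]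
          nlinarith [abs_nonneg (z i)]
      _ = N := by simp
  refine h1.trans ?_
  have hN : (N:ℝ) ≤ ((N:ℝ)+1)^2 := by nlinarith [Nat.cast_nonneg (α := ℝ) N]
  calc Real.sqrt N ≤ Real.sqrt (((N:ℝ)+1)^2) := Real.sqrt_le_sqrt hN
    _ = N+1 := Real.sqrt_sq (by positivity)

lemma continuous_coord (i : Fin N) : Continuous fun z : Euc N => z i :=
  (continuous_apply i).comp (PiLp.continuous_ofLp 2 _)

lemma isCompact_K0 : IsCompact (K0 N) := by
  apply Metric.isCompact_of_isClosed_isBounded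
  · have h : K0 N = ⋂ i, {z : Euc N | |z i| ≤ 1} := by
      ext z; simp [K0, Set.mem_iInter]
    rw [h]
    exact isClosed_iInter fun i =>
      isClosed_le (continuous_coord i).abs continuous_const
  · refine (Metric.isBounded_closedBall (x := (0:Euc N)) (r := N+1)).subset fun z hz => ?_
    rw [Metric.mem_closedBall, dist_zero_right]
    exact norm_le_of_mem_K0 hz

lemma zero_mem_K0 : (0 : Euc N) ∈ K0 N := by intro i; simp

lemma bounded_of_periodic {f : Euc N → ℝ} (hc : Continuous f) (hp : ZPeriodic f) :
    ∃ C : ℝ, 0 ≤ C ∧ ∀ x, |f x| ≤ C := by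
  obtain ⟨z0, _, hz0⟩ := isCompact_K0.exists_isMaxOn ⟨0, zero_mem_K0⟩
    (continuous_abs.comp hc).continuousOn
  refine ⟨|f z0|, abs_nonneg _, fun x => ?_⟩
  obtain ⟨k, hk⟩ := exists_shift x
  have h := hz0 hk
  rw [← periodic_shift hp x k]
  simpa using h

lemma bounded_family (hm : 1 ≤ m) (v : Fin m → Euc N → ℝ)
    (hvc : ∀ i, Continuous (v i)) (hvp : ∀ i, ZPeriodic (v i)) :
    ∃ C : ℝ, 0 ≤ C ∧ ∀ i x, |v i x| ≤ C := by
  choose C hC0 hC using fun i => bounded_of_periodic (hvc i) (hvp i)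
  haveI : Nonempty (Fin m) := ⟨⟨0, hm⟩⟩
  refine ⟨Finset.univ.sup' Finset.univ_nonempty C,
    (hC0 (Classical.arbitrary _)).trans (Finset.le_sup' C (Finset.mem_univ _)),
    fun i x => (hC i x).trans (Finset.le_sup' C (Finset.mem_univ _))⟩

lemma exists_max (hm : 1 ≤ m) (v u : Fin m → Euc N → ℝ)
    (hvc : ∀ i, Continuous (v i)) (hvp : ∀ i, ZPeriodic (v i))
    (huc : ∀ i, Continuous (u i)) (hup : ∀ i, ZPeriodic (u i))
    (ε : ℝ) (hε : 0 < ε) :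
    ∃ (a b : Euc N) (I : Fin m), a ∈ K0 N ∧ ∀ (x y : Euc N) (i : Fin m),
      v i x - u i y - ‖x - y‖^2/(2*ε) ≤ v I a - u I b - ‖a - b‖^2/(2*ε) := by
  obtain ⟨Cv, hCv0, hCv⟩ := bounded_family hm v hvc hvp
  obtain ⟨Cu, hCu0, hCu⟩ := bounded_family hm u huc hup
  set R3 := Real.sqrt (2*ε*(2*Cv+2*Cu)+1) with hR3
  have hR3nn : 0 ≤ R3 := Real.sqrt_nonneg _
  have hR3sq : R3^2 = 2*ε*(2*Cv+2*Cu)+1 := Real.sq_sqrt (by positivity)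
  set g : Fin m → Euc N × Euc N → ℝ :=
    fun i q => v i q.1 - u i q.2 - ‖q.1 - q.2‖^2/(2*ε) with hg
  have hgc : ∀ i, Continuous (g i) := fun i =>
    (((hvc i).comp continuous_fst).sub ((huc i).comp continuous_snd)).sub
      (((continuous_fst.sub continuous_snd).norm.pow 2).div_const _)
  set S : Set (Euc N × Euc N) := K0 N ×ˢ Metric.closedBall 0 (N+1+R3) with hS
  have hSne : ((0:Euc N),(0:Euc N)) ∈ S := by
    refine ⟨zero_mem_K0, ?_⟩
    rw [Metric.mem_closedBall, dist_self]
    positivity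
  have hScomp : IsCompact S := isCompact_K0.prod (isCompact_closedBall _ _)
  choose a ha hamax using fun i =>
    hScomp.exists_isMaxOn ⟨_, hSne⟩ (hgc i).continuousOn
  obtain ⟨I, -, hI⟩ := Finset.univ.exists_max_image (fun i => g i (a i))
    ⟨⟨0, hm⟩, Finset.mem_univ _⟩
  refine ⟨(a I).1, (a I).2, I, (ha I).1, ?_⟩
  intro x y i
  have hIg : ∀ j : Fin m, g j (a j) ≤ g I (a I) := fun j => hI j (Finset.mem_univ _)
  obtain ⟨k, hk⟩ := exists_shift x
  set w := (WithLp.equiv 2 (Fin N → ℝ)).symm (fun j => ((k j : ℤ) : ℝ)) with hw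
  set x' := x - w with hx'
  set y' := y - w with hy'
  have hxy' : x' - y' = x - y := sub_sub_sub_cancel_right x y w
  have hval : g i (x', y') = g i (x, y) := by
    simp only [hg, hxy']
    rw [hx', hy', periodic_shift (hvp i), periodic_shift (hup i)]
  show g i (x, y) ≤ g I (a I)
  rw [← hval]
  have hx'K : x' ∈ K0 N := hk
  have hx'n : ‖x'‖ ≤ N + 1 := norm_le_of_mem_K0 hx'K
  by_cases hcase : ‖x' - y'‖ ≤ R3
  · have hy'n : ‖y'‖ ≤ N + 1 + R3 := by
      have h0 : ‖y'‖ ≤ ‖x'‖ + ‖x' - y'‖ := by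
        calc ‖y'‖ = ‖x' - (x' - y')‖ := by congr 1; abel
          _ ≤ ‖x'‖ + ‖x' - y'‖ := norm_sub_le _ _
      linarith
    have hmem : (x', y') ∈ S := by
      refine ⟨hx'K, ?_⟩
      rw [Metric.mem_closedBall, dist_zero_right]
      exact hy'n
    exact (hamax i hmem).trans (hIg i)
  · push_neg at hcase
    have hsq : R3^2 < ‖x' - y'‖^2 := by
      apply pow_lt_pow_left₀ hcase hR3nn (by norm_num)
    have h1 : g i (x', y') < g i (x', x') := by
      have hvb := hCv i x'
      have hub := hCu i y'
      have hub2 := hCu i x'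
      have habs1 := abs_le.1 hvb
      have habs2 := abs_le.1 hub
      have habs3 := abs_le.1 hub2
      have hnormz : ‖x' - x'‖ = 0 := by simp
      simp only [hg, hnormz]
      have hden : (0:ℝ) < 2*ε := by linarith
      have hkey : 2*Cv + 2*Cu < ‖x' - y'‖^2/(2*ε) := by
        rw [lt_div_iff₀ hden]
        nlinarith
      have hzero : (0:ℝ)^2/(2*ε) = 0 := by simp
      rw [hzero]
      nlinarith
    have hmem : (x', x') ∈ S := by
      refine ⟨hx'K, ?_⟩
      rw [Metric.mem_closedBall, dist_zero_right]
      linarith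
    exact h1.le.trans ((hamax i hmem).trans (hIg i))

lemma insuper_of_max (v' : Euc N → ℝ) (a b : Euc N) (ε : ℝ) (hε : 0 < ε)
    (hmax : ∀ y, v' y - ‖y - b‖^2/(2*ε) ≤ v' a - ‖a - b‖^2/(2*ε)) :
    InSuperDiff v' a (ε⁻¹ • (a - b)) := by
  intro ε' hε'
  refine ⟨2*ε*ε', by positivity, fun y hy => ?_⟩
  have h1 := hmax y
  have h2 : ‖y - b‖^2 = ‖y - a‖^2 + 2*⟪y - a, a - b⟫ + ‖a - b‖^2 := by
    have he : y - b = (y - a) + (a - b) := by abel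
    rw [he, norm_add_sq_real]
  have h3 : (⟪ε⁻¹ • (a - b), y - a⟫ : ℝ) = ε⁻¹ * ⟪y - a, a - b⟫ := by
    rw [real_inner_smul_left, real_inner_comm]
  have hd : dist y a = ‖y - a‖ := dist_eq_norm _ _
  rw [hd] at hy ⊢
  rw [h3]
  have hn : (0:ℝ) ≤ ‖y - a‖ := norm_nonneg _
  set A := ‖y - a‖ with hA
  set t := (⟪y - a, a - b⟫ : ℝ) with ht
  rw [h2] at h1
  have h2e : (0:ℝ) < 2*ε := by linarith
  have hsplit : (A^2 + 2*t + ‖a - b‖^2)/(2*ε) = A^2/(2*ε) + ε⁻¹*t + ‖a - b‖^2/(2*ε) := by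
    field_simp
  rw [hsplit] at h1
  have hfin : A^2/(2*ε) ≤ ε' * A := by
    rw [div_le_iff₀ h2e]
    nlinarith [mul_le_mul_of_nonneg_left hy.le hn]
  linarith

lemma insub_of_max (u' : Euc N → ℝ) (a b : Euc N) (ε : ℝ) (hε : 0 < ε)
    (hmax : ∀ y, - u' y - ‖a - y‖^2/(2*ε) ≤ - u' b - ‖a - b‖^2/(2*ε)) :
    InSubDiff u' b (ε⁻¹ • (a - b)) := by
  intro ε' hε'
  refine ⟨2*ε*ε', by positivity, fun y hy => ?_⟩
  have h1 := hmax y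
  have h2 : ‖a - y‖^2 = ‖a - b‖^2 - 2*⟪a - b, y - b⟫ + ‖y - b‖^2 := by
    have he : a - y = (a - b) - (y - b) := by abel
    rw [he, norm_sub_sq_real]
  have h3 : (⟪ε⁻¹ • (a - b), y - b⟫ : ℝ) = ε⁻¹ * ⟪a - b, y - b⟫ := by
    rw [real_inner_smul_left]
  have hd : dist y b = ‖y - b‖ := dist_eq_norm _ _
  rw [hd] at hy ⊢
  rw [h3]
  have hn : (0:ℝ) ≤ ‖y - b‖ := norm_nonneg _
  set A := ‖y - b‖ with hA
  set t := (⟪a - b, y - b⟫ : ℝ) with ht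
  rw [h2] at h1
  have h2e : (0:ℝ) < 2*ε := by linarith
  have hsplit : (‖a - b‖^2 - 2*t + A^2)/(2*ε) = ‖a - b‖^2/(2*ε) - ε⁻¹*t + A^2/(2*ε) := by
    field_simp
  rw [hsplit] at h1
  have hfin : A^2/(2*ε) ≤ ε' * A := by
    rw [div_le_iff₀ h2e]
    nlinarith [mul_le_mul_of_nonneg_left hy.le hn]
  linarith

lemma coupling_nonneg (B : Matrix (Fin m) (Fin m) ℝ)
    (hoff : ∀ i j, i ≠ j → B i j ≤ 0) (hrow : ∀ i, ∑ j, B i j = 0)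
    (w : Fin m → ℝ) (I : Fin m) (hw : ∀ j, w j ≤ w I) :
    0 ≤ ∑ j, B I j * w j := by
  have h1 : ∑ j, B I j * w j = ∑ j, B I j * (w j - w I) := by
    simp only [mul_sub, Finset.sum_sub_distrib, ← Finset.sum_mul, hrow I]
    ring
  rw [h1]
  apply Finset.sum_nonneg
  intro j _
  by_cases hj : j = I
  · simp [hj]
  · have hb := hoff I j (Ne.symm hj)
    have hwj := hw j
    nlinarith

end AuxComparison

/-- Comparison principle for the discounted system: a subsolution lies below a supersolution. -/
theorem discounted_comparison
    {N m : ℕ} (hN : 1 ≤ N) (hm : 1 ≤ m)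
    (H : Fin m → Euc N → Euc N → ℝ) (B : Matrix (Fin m) (Fin m) ℝ) (α β : ℝ → ℝ)
    (hst : Standing H B α β)
    (hα : Tendsto α atTop atTop) (hβ : Tendsto β atTop atTop)
    (lam c : ℝ) (hlam : 0 < lam)
    (v u : Fin m → Euc N → ℝ)
    (hv : IsSubsol H B lam c v) (hu : IsSupersol H B lam c u) :
    ∀ (x : Euc N) (i : Fin m), v i x ≤ u i x := by
  obtain ⟨hvc, hvp, hvs⟩ := hv
  obtain ⟨huc, hup, hus⟩ := hu
  obtain ⟨hHc, hHp, hHconv, hHpin, hBoff, hBrow, hBirr⟩ := hst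
  intro z i₀
  have key : ∀ η > 0, lam * (v i₀ z - u i₀ z) ≤ η := by
    intro η hη
    obtain ⟨Cv, hCv0, hCv⟩ := bounded_family hm v hvc hvp
    obtain ⟨Cu, hCu0, hCu⟩ := bounded_family hm u huc hup
    set SB := ∑ i, ∑ j, |B i j| with hSBdef
    have hSB0 : 0 ≤ SB :=
      Finset.sum_nonneg fun i _ => Finset.sum_nonneg fun j _ => abs_nonneg _
    have hrowB : ∀ i, ∑ j, |B i j| ≤ SB := fun i =>
      Finset.single_le_sum (f := fun i => ∑ j, |B i j|)
        (fun i _ => Finset.sum_nonneg fun j _ => abs_nonneg _) (Finset.mem_univ i)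
    have hmvabs : ∀ (w : Fin m → ℝ) (C : ℝ), 0 ≤ C → (∀ j, |w j| ≤ C) →
        ∀ i, |∑ j, B i j * w j| ≤ SB * C := by
      intro w C hC hw i
      calc |∑ j, B i j * w j| ≤ ∑ j, |B i j| * C := by
            refine (Finset.abs_sum_le_sum_abs _ _).trans (Finset.sum_le_sum fun j _ => ?_)
            rw [abs_mul]
            exact mul_le_mul_of_nonneg_left (hw j) (abs_nonneg _)
        _ = (∑ j, |B i j|) * C := by rw [Finset.sum_mul]
        _ ≤ SB * C := mul_le_mul_of_nonneg_right (hrowB i) hC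
    have hmv : ∀ (w : Fin m → ℝ) (i : Fin m), B.mulVec w i = ∑ j, B i j * w j := by
      intro w i; simp [Matrix.mulVec, dotProduct]
    set C₁ := c + SB*Cv + lam*Cv with hC₁
    obtain ⟨R₀, hR₀⟩ := Filter.eventually_atTop.1 (hα.eventually_ge_atTop (C₁+1))
    set R := max R₀ 0 with hRdef
    have hR0 : (0:ℝ) ≤ R := le_max_right _ _
    have hfc : Continuous (fun q : Euc N × Euc N => fun i => H i q.1 q.2) :=
      continuous_pi fun i => hHc i
    have hscomp : IsCompact
        (Metric.closedBall (0:Euc N) (N+2) ×ˢ Metric.closedBall (0:Euc N) R) :=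
      (isCompact_closedBall _ _).prod (isCompact_closedBall _ _)
    have hucH := hscomp.uniformContinuousOn_of_continuous hfc.continuousOn
    rw [Metric.uniformContinuousOn_iff] at hucH
    obtain ⟨δ, hδ0, hδ⟩ := hucH η hη
    set d := min δ 1 with hddef
    have hd0 : 0 < d := lt_min hδ0 one_pos
    have hd1 : d ≤ 1 := min_le_right _ _
    have hdδ : d ≤ δ := min_le_left _ _
    set ε := d^2/(8*(Cu+1)) with hεdef
    have hε : 0 < ε := by positivity
    obtain ⟨a, b, I, haK, hmax⟩ := exists_max hm v u hvc hvp huc hup ε hε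
    set p := ε⁻¹ • (a - b) with hpdef
    have h2e : (0:ℝ) < 2*ε := by linarith
    have hzero : (0:ℝ)^2/(2*ε) = 0 := by simp
    have hab2 : ‖a - b‖^2 ≤ 2*ε*(2*Cu) := by
      have h0 := hmax a a I
      have hzn : ‖a - a‖ = 0 := by simp
      rw [hzn, hzero] at h0
      have h0' : ‖a - b‖^2/(2*ε) ≤ u I a - u I b := by linarith
      have habs1 := abs_le.1 (hCu I a)
      have habs2 := abs_le.1 (hCu I b)
      rw [div_le_iff₀ h2e] at h0'
      nlinarith
    have habnn : (0:ℝ) ≤ ‖a - b‖ := norm_nonneg _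
    have habd : ‖a - b‖ < d := by
      by_contra hcon
      push_neg at hcon
      have hdd : d^2 ≤ ‖a - b‖^2 := by nlinarith
      have hq : 2*ε*(2*Cu) < d^2 := by
        have h8 : (0:ℝ) < 8*(Cu+1) := by positivity
        have heq : 2*ε*(2*Cu) = d^2 * (4*Cu) / (8*(Cu+1)) := by
          rw [hεdef]; ring
        rw [heq, div_lt_iff₀ h8]
        nlinarith [sq_nonneg d, hd0]
      linarith
    have hsup : InSuperDiff (v I) a p := by
      apply insuper_of_max _ _ _ _ hε
      intro y
      have h := hmax y b I
      linarith
    have hsub : InSubDiff (u I) b p := by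
      apply insub_of_max _ _ _ _ hε
      intro y
      have h := hmax a y I
      linarith
    have h1 := hvs a I p hsup
    have h2 := hus b I p hsub
    simp only [hmv] at h1 h2
    have hBv := hmvabs (fun j => v j a) Cv hCv0 (fun j => hCv j a) I
    have hBu := hmvabs (fun j => u j b) Cu hCu0 (fun j => hCu j b) I
    have hBv' := abs_le.1 hBv
    have hvIa := abs_le.1 (hCv I a)
    have hHC₁ : H I a p ≤ C₁ := by
      have hmul := mul_le_mul_of_nonneg_left hvIa.1 hlam.le
      rw [hC₁]
      linarith [h1, hBv'.1, hmul]
    have hpR : ‖p‖ ≤ R := by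
      by_contra hcon
      push_neg at hcon
      have h4 := hR₀ ‖p‖ (le_of_lt (lt_of_le_of_lt (le_max_left R₀ 0) hcon))
      have h5 := (hHpin I a p).1
      linarith
    have han : ‖a‖ ≤ N+1 := norm_le_of_mem_K0 haK
    have hamem : a ∈ Metric.closedBall (0:Euc N) (N+2) := by
      rw [Metric.mem_closedBall, dist_zero_right]; linarith
    have hbn : ‖b‖ ≤ (N:ℝ)+2 := by
      have hb1 : ‖b‖ ≤ ‖a‖ + ‖a - b‖ := by
        calc ‖b‖ = ‖a - (a - b)‖ := by congr 1; abel
          _ ≤ ‖a‖ + ‖a - b‖ := norm_sub_le _ _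
      linarith
    have hbmem : b ∈ Metric.closedBall (0:Euc N) (N+2) := by
      rw [Metric.mem_closedBall, dist_zero_right]; exact hbn
    have hpmem : p ∈ Metric.closedBall (0:Euc N) R := by
      rw [Metric.mem_closedBall, dist_zero_right]; exact hpR
    have hdist : dist ((a,p) : Euc N × Euc N) ((b,p) : Euc N × Euc N) < δ := by
      have hde : dist ((a,p) : Euc N × Euc N) ((b,p) : Euc N × Euc N) = dist a b := by
        rw [Prod.dist_eq, dist_self]
        exact max_eq_left dist_nonneg
      rw [hde, dist_eq_norm]
      linarith
    have hδ' := hδ (a,p) ⟨hamem, hpmem⟩ (b,p) ⟨hbmem, hpmem⟩ hdist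
    have hδ'' : dist (fun i => H i a p) (fun i => H i b p) < η := hδ'
    have hHdiff : H I b p - H I a p ≤ η := by
      have hd1 : dist (H I a p) (H I b p) ≤
          dist (fun i => H i a p) (fun i => H i b p) :=
        dist_le_pi_dist (fun i => H i a p) (fun i => H i b p) I
      rw [Real.dist_eq] at hd1
      have habs := abs_lt.1 (lt_of_le_of_lt hd1 hδ'')
      linarith [habs.1]
    set wv : Fin m → ℝ := fun j => v j a - u j b with hwv
    have hwI : ∀ j, wv j ≤ wv I := by
      intro j
      have h := hmax a b j
      simp only [hwv]
      linarith
    have hcoup : 0 ≤ ∑ j, B I j * wv j := coupling_nonneg B hBoff hBrow wv I hwI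
    have hsum : ∑ j, B I j * v j a - ∑ j, B I j * u j b = ∑ j, B I j * wv j := by
      rw [← Finset.sum_sub_distrib]
      apply Finset.sum_congr rfl
      intro j _
      simp only [hwv]
      ring
    have hchain : lam * wv I ≤ H I b p - H I a p := by
      rw [← hsum] at hcoup
      simp only [hwv, mul_sub]
      linarith [h1, h2, hcoup]
    have hz := hmax z z i₀
    have hzn : ‖z - z‖ = 0 := by simp
    rw [hzn, hzero] at hz
    have hpen : (0:ℝ) ≤ ‖a - b‖^2/(2*ε) := by positivity
    have hfinal : v i₀ z - u i₀ z ≤ wv I := by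
      simp only [hwv]
      linarith
    have hmul2 := mul_le_mul_of_nonneg_left hfinal hlam.le
    linarith [hchain, hHdiff, hmul2]
  by_contra hcon
  push_neg at hcon
  have h2 : 0 < lam * (v i₀ z - u i₀ z) := mul_pos hlam (by linarith)
  have h3 := key _ (half_pos h2)
  linarith
end
end

section
/- There exist constants K and κ, independent of λ, such that for every λ > 0 one has ‖u^λ‖_∞ ≤ K and each component of u^λ is κ-Lipschitz continuous on M. In particular, ‖λ u^λ‖_∞ → 0 as λ → 0⁺. -/
open scoped RealInnerProductSpace
open Filter MeasureTheory Set

noncomputable section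

namespace Disc

variable {N m : ℕ}

def emb (N : ℕ) (k : Fin N → ℤ) : Euc N :=
  (WithLp.equiv 2 (Fin N → ℝ)).symm (fun i => (k i : ℝ))

lemma zper_apply {f : Euc N → ℝ} (hf : ZPeriodic f) (x : Euc N) (k : Fin N → ℤ) :
    f (x + emb N k) = f x := hf x k

lemma exists_shift (x : Euc N) : ∃ k : Fin N → ℤ, ‖x + emb N k‖ ≤ Real.sqrt N := by
  refine ⟨fun i => -⌊x i⌋, ?_⟩
  have hcoord : ∀ i : Fin N, (x + emb N (fun i => -⌊x i⌋)) i = Int.fract (x i) := by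
    intro i
    show x i + (((-⌊x i⌋ : ℤ) : ℝ)) = Int.fract (x i)
    rw [Int.fract]
    push_cast
    ring
  rw [EuclideanSpace.norm_eq]
  have : ∑ i : Fin N, ‖(x + emb N (fun i => -⌊x i⌋)) i‖ ^ 2 ≤ (N : ℝ) := by
    calc ∑ i : Fin N, ‖(x + emb N (fun i => -⌊x i⌋)) i‖ ^ 2 ≤ ∑ _i : Fin N, (1:ℝ) := by
          apply Finset.sum_le_sum
          intro i _
          rw [hcoord i]
          have h1 : |Int.fract (x i)| ≤ 1 := by
            rw [abs_le]
            constructor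
            · linarith [Int.fract_nonneg (x i)]
            · linarith [Int.fract_lt_one (x i)]
          calc ‖Int.fract (x i)‖ ^ 2 = |Int.fract (x i)| ^ 2 := by rw [Real.norm_eq_abs]
            _ ≤ 1 ^ 2 := by exact pow_le_pow_left₀ (abs_nonneg _) h1 2
            _ = 1 := one_pow 2
      _ = (N : ℝ) := by simp
  calc Real.sqrt (∑ i : Fin N, ‖(x + emb N (fun i => -⌊x i⌋)) i‖ ^ 2) ≤ Real.sqrt N :=
    Real.sqrt_le_sqrt this

lemma exists_max {f : Euc N → ℝ} (hc : Continuous f) (hp : ZPeriodic f) :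
    ∃ x₀, ‖x₀‖ ≤ Real.sqrt N ∧ ∀ x, f x ≤ f x₀ := by
  obtain ⟨x₀, hx₀, hmax⟩ := (isCompact_closedBall (0 : Euc N) (Real.sqrt N)).exists_isMaxOn
    ⟨0, Metric.mem_closedBall_self (Real.sqrt_nonneg _)⟩ hc.continuousOn
  refine ⟨x₀, by simpa [Metric.mem_closedBall, dist_eq_norm] using hx₀, fun x => ?_⟩
  obtain ⟨k, hk⟩ := exists_shift x
  have : f (x + emb N k) ≤ f x₀ := hmax (by simpa [Metric.mem_closedBall, dist_eq_norm] using hk)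
  rwa [zper_apply hp] at this

lemma exists_max_pair [NeZero m] {u : Fin m → Euc N → ℝ}
    (hc : ∀ i, Continuous (u i)) (hp : ∀ i, ZPeriodic (u i)) :
    ∃ i₀ x₀, ‖x₀‖ ≤ Real.sqrt N ∧ ∀ i x, u i x ≤ u i₀ x₀ := by
  have h : ∀ i, ∃ x₀, ‖x₀‖ ≤ Real.sqrt N ∧ ∀ x, u i x ≤ u i x₀ :=
    fun i => exists_max (hc i) (hp i)
  choose xm hxm hxmax using h
  obtain ⟨i₀, _, hi₀⟩ := Finset.exists_max_image Finset.univ (fun i => u i (xm i))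
    ⟨Classical.arbitrary _, Finset.mem_univ _⟩
  exact ⟨i₀, xm i₀, hxm i₀, fun i x => le_trans (hxmax i x) (hi₀ i (Finset.mem_univ i))⟩



lemma superdiff_zero_of_max {u : Euc N → ℝ} {x : Euc N} (h : ∀ y, u y ≤ u x) :
    InSuperDiff u x 0 := by
  intro ε hε
  refine ⟨1, one_pos, fun y _ => ?_⟩
  have h0 : ⟪(0 : Euc N), y - x⟫ = 0 := inner_zero_left _
  rw [h0]
  have : ε * dist y x ≥ 0 := mul_nonneg hε.le dist_nonneg
  linarith [h y]

lemma subdiff_zero_of_min {u : Euc N → ℝ} {x : Euc N} (h : ∀ y, u x ≤ u y) :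
    InSubDiff u x 0 := by
  intro ε hε
  refine ⟨1, one_pos, fun y _ => ?_⟩
  have h0 : ⟪(0 : Euc N), y - x⟫ = 0 := inner_zero_left _
  rw [h0]
  have : ε * dist y x ≥ 0 := mul_nonneg hε.le dist_nonneg
  linarith [h y]

lemma mulVec_eq (B : Matrix (Fin m) (Fin m) ℝ) (v : Fin m → ℝ) (i : Fin m) :
    B.mulVec v i = ∑ j, B i j * v j := rfl

lemma lipschitz_of_superdiff_bound {u : Euc N → ℝ} (hc : Continuous u) (hp : ZPeriodic u)
    {R : ℝ} (hR0 : 0 ≤ R) (hR : ∀ x p, InSuperDiff u x p → ‖p‖ ≤ R) :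
    LipschitzWith (Real.toNNReal R) u := by
  obtain ⟨xM, _, hM⟩ := exists_max hc hp
  have key : ∀ y x : Euc N, ∀ δ > (0:ℝ), u x - u y ≤ (R + δ) * ‖x - y‖ := by
    intro y x δ hδ
    have hRδ : 0 < R + δ := by linarith
    set g : Euc N → ℝ := fun z => u z - (R + δ) * ‖z - y‖ with hg
    have hgc : Continuous g := hc.sub (continuous_const.mul ((continuous_id.sub continuous_const).norm))
    set M₀ : ℝ := (u xM - u y) / (R + δ) + 1 with hM₀
    have hM₀pos : 0 < M₀ := by
      have h0 : 0 ≤ (u xM - u y) / (R + δ) := div_nonneg (by linarith [hM y]) hRδ.le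
      rw [hM₀]
      linarith
    obtain ⟨xb, hxb, hxbmax⟩ := (isCompact_closedBall y M₀).exists_isMaxOn
      ⟨y, Metric.mem_closedBall_self hM₀pos.le⟩ hgc.continuousOn
    have hglob : ∀ z, g z ≤ g xb := by
      intro z
      by_cases hz : z ∈ Metric.closedBall y M₀
      · exact hxbmax hz
      · have hz' : M₀ < ‖z - y‖ := by
          simpa [Metric.mem_closedBall, dist_eq_norm, not_le] using hz
        have hgz : g z < u y := by
          have hMz := hM z
          have hmul : (R + δ) * M₀ < (R + δ) * ‖z - y‖ := mul_lt_mul_of_pos_left hz' hRδ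
          have hM₀eq : (R + δ) * M₀ = (u xM - u y) + (R + δ) := by
            rw [hM₀]; field_simp
          simp only [hg]
          nlinarith
        have hgy : g y = u y := by simp [hg]
        calc g z ≤ u y := hgz.le
          _ = g y := hgy.symm
          _ ≤ g xb := hxbmax (Metric.mem_closedBall_self hM₀pos.le)
    by_cases hcase : g xb ≤ u y
    · have h1 := le_trans (hglob x) hcase
      simp only [hg] at h1
      linarith
    · exfalso
      push_neg at hcase
      have hxbney : xb ≠ y := by
        intro h; rw [h] at hcase; simp [hg] at hcase
      set r : ℝ := ‖xb - y‖ with hr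
      have hrpos : 0 < r := by
        rw [hr, norm_pos_iff]; exact sub_ne_zero_of_ne hxbney
      set p : Euc N := ((R + δ) / r) • (xb - y) with hpdef
      have hpmem : InSuperDiff u xb p := by
        intro ε hε
        refine ⟨2 * r * ε / (R + δ), by positivity, fun y' hy' => ?_⟩
        have h1 : u y' - u xb ≤ (R + δ) * (‖y' - y‖ - r) := by
          have h2 := hglob y'
          simp only [hg] at h2
          nlinarith
        have hsq : ‖y' - y‖ - r ≤ (‖y' - y‖ ^ 2 - r ^ 2) / (2 * r) := by
          rw [le_div_iff₀ (by positivity)]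
          nlinarith [sq_nonneg (‖y' - y‖ - r)]
        have hexp : ‖y' - y‖ ^ 2 = r ^ 2 + 2 * ⟪xb - y, y' - xb⟫ + ‖y' - xb‖ ^ 2 := by
          have hab : y' - y = (xb - y) + (y' - xb) := by abel
          rw [hab, norm_add_sq_real, hr]
        have hip : ⟪p, y' - xb⟫ = ((R + δ) / r) * ⟪xb - y, y' - xb⟫ := real_inner_smul_left _ _ _
        have hd : dist y' xb = ‖y' - xb‖ := dist_eq_norm _ _
        rw [hd]
        have hmain : u y' - u xb - ⟪p, y' - xb⟫ ≤ (R + δ) * ‖y' - xb‖ ^ 2 / (2 * r) := by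
          have h2 : u y' - u xb ≤ (R + δ) * ((‖y' - y‖ ^ 2 - r ^ 2) / (2 * r)) :=
            le_trans h1 (by nlinarith)
          rw [hip]
          rw [hexp] at h2
          have heq : (R + δ) * ((r ^ 2 + 2 * ⟪xb - y, y' - xb⟫ + ‖y' - xb‖ ^ 2 - r ^ 2) / (2 * r))
              = (R + δ) / r * ⟪xb - y, y' - xb⟫ + (R + δ) * ‖y' - xb‖ ^ 2 / (2 * r) := by
            field_simp
            ring
          linarith [h2, heq.le, heq.ge]
        have hsmall : (R + δ) * ‖y' - xb‖ ^ 2 / (2 * r) ≤ ε * ‖y' - xb‖ := by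
          rw [hd] at hy'
          have h3 : ‖y' - xb‖ * (R + δ) < 2 * r * ε := (lt_div_iff₀ hRδ).mp hy'
          rw [div_le_iff₀ (by positivity)]
          nlinarith [mul_le_mul_of_nonneg_left h3.le (norm_nonneg (y' - xb)), norm_nonneg (y' - xb)]
        linarith
      have hnorm : ‖p‖ = R + δ := by
        rw [hpdef, norm_smul, Real.norm_eq_abs, abs_of_pos (by positivity), ← hr]
        field_simp
      have hcontra := hR xb p hpmem
      rw [hnorm] at hcontra
      linarith
  apply LipschitzWith.of_dist_le_mul
  intro x y
  have hb : ∀ x y : Euc N, u x - u y ≤ R * ‖x - y‖ := by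
    intro x y
    have hall : ∀ ε > (0:ℝ), u x - u y ≤ R * ‖x - y‖ + ε := by
      intro ε hε
      have hδ : (0:ℝ) < ε / (‖x - y‖ + 1) := by positivity
      have hk := key y x _ hδ
      have hle : ε / (‖x - y‖ + 1) * ‖x - y‖ ≤ ε := by
        rw [div_mul_eq_mul_div, div_le_iff₀ (by positivity)]
        nlinarith [norm_nonneg (x - y)]
      nlinarith
    linarith [le_of_forall_pos_le_add hall]
  rw [Real.dist_eq, dist_eq_norm, Real.coe_toNNReal R hR0, abs_le]
  constructor
  · have h1 := hb y x
    rw [norm_sub_rev] at h1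
    linarith
  · linarith [hb x y]




set_option maxHeartbeats 2000000 in
lemma comparison [NeZero m]
    (H : Fin m → Euc N → Euc N → ℝ) (B : Matrix (Fin m) (Fin m) ℝ)
    (hHc : ∀ i, Continuous fun q : Euc N × Euc N => H i q.1 q.2)
    (hBoff : ∀ i j, i ≠ j → B i j ≤ 0) (hBrow : ∀ i, ∑ j, B i j = 0)
    {lam c : ℝ} (hlam : 0 < lam)
    {u w : Fin m → Euc N → ℝ}
    (hu : IsSubsol H B lam c u) (hw : IsSupersol H B lam c w)
    {κ : ℝ} (hκ : 0 ≤ κ)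
    (hLip : (∀ i x y, u i x - u i y ≤ κ * ‖x - y‖) ∨ (∀ i x y, w i x - w i y ≤ κ * ‖x - y‖)) :
    ∀ i x, u i x ≤ w i x := by
  obtain ⟨huc, hup, huvis⟩ := hu
  obtain ⟨hwc, hwp, hwvis⟩ := hw
  have hdc : ∀ i, Continuous (fun x => u i x - w i x) := fun i => (huc i).sub (hwc i)
  have hdp : ∀ i, ZPeriodic (fun x => u i x - w i x) := fun i x k => by
    simp only
    rw [hup i x k, hwp i x k]
  obtain ⟨i₀, x₀, hx₀ball, hmaxd⟩ := exists_max_pair hdc hdp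
  set θ : ℝ := u i₀ x₀ - w i₀ x₀ with hθdef
  clear_value θ
  suffices hθ : θ ≤ 0 by
    intro i x
    have := hmaxd i x
    linarith
  by_contra hcon
  push_neg at hcon
  -- global bounds on u and -w
  obtain ⟨iu, xu, _, hMu⟩ := exists_max_pair huc hup
  set Mu : ℝ := u iu xu with hMudef
  clear_value Mu
  have hwnc : ∀ i, Continuous (fun x => -(w i x)) := fun i => (hwc i).neg
  have hwnp : ∀ i, ZPeriodic (fun x => -(w i x)) := fun i x k => by
    simp only
    rw [hwp i x k]
  obtain ⟨iw, xw, _, hMw⟩ := exists_max_pair hwnc hwnp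
  set Mw : ℝ := -(w iw xw) with hMwdef
  clear_value Mw
  -- uniform continuity of the Hamiltonians on a compact set
  set S : Set (Euc N × Euc N) :=
    (Metric.closedBall (0 : Euc N) (Real.sqrt N + 1)) ×ˢ (Metric.closedBall (0 : Euc N) (2*κ))
    with hSdef
  have hScomp : IsCompact S := (isCompact_closedBall _ _).prod (isCompact_closedBall _ _)
  have hε' : 0 < lam * θ / 2 := by positivity
  have hδi : ∀ i : Fin m, ∃ δ > 0, ∀ a ∈ S, ∀ b ∈ S, dist a b < δ →
      dist (H i a.1 a.2) (H i b.1 b.2) < lam * θ / 2 := by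
    intro i
    have huc' := hScomp.uniformContinuousOn_of_continuous ((hHc i).continuousOn)
    exact (Metric.uniformContinuousOn_iff.mp huc') _ hε'
  choose δf hδfpos hδf using hδi
  have hne : (Finset.univ : Finset (Fin m)).Nonempty := Finset.univ_nonempty
  set δ' : ℝ := Finset.univ.inf' hne δf with hδ'def
  have hδ'pos : 0 < δ' := (Finset.lt_inf'_iff hne).mpr (fun i _ => hδfpos i)
  have hδ'le : ∀ i, δ' ≤ δf i := fun i => Finset.inf'_le _ (Finset.mem_univ _)
  clear_value δ'
  -- choice of ε
  set C₂ : ℝ := max (Mu + Mw - θ) 1 with hC₂def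
  have hC₂pos : 0 < C₂ := lt_of_lt_of_le one_pos (le_max_right _ _)
  have hC₂ge : Mu + Mw - θ ≤ C₂ := le_max_left _ _
  clear_value C₂
  set ε : ℝ := min (1/(2*C₂)) (δ'/(2*(2*κ+1))) with hεdef
  have hε1 : ε ≤ 1/(2*C₂) := min_le_left _ _
  have hε2 : ε ≤ δ'/(2*(2*κ+1)) := min_le_right _ _
  have hεpos : 0 < ε := by rw [hεdef]; exact lt_min (by positivity) (by positivity)
  clear_value ε
  have hεC₂ : C₂ ≤ 1/(2*ε) := by
    rw [le_div_iff₀ (by positivity)]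
    have h2 := (le_div_iff₀ (by positivity)).mp hε1
    nlinarith
  have hεδ' : 2*κ*ε < δ' := by
    have h2 := (le_div_iff₀ (by positivity)).mp hε2
    nlinarith
  -- doubling functional
  set D : Set (Euc N × Euc N) :=
    (Metric.closedBall (0 : Euc N) (Real.sqrt N)) ×ˢ (Metric.closedBall (0 : Euc N) (Real.sqrt N + 1))
    with hDdef
  have hDcomp : IsCompact D := (isCompact_closedBall _ _).prod (isCompact_closedBall _ _)
  have hDne : D.Nonempty := ⟨(0,0), by
    refine ⟨?_, ?_⟩ <;> simp only [Metric.mem_closedBall, dist_self] <;> positivity⟩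
  set Φ : Fin m → Euc N × Euc N → ℝ :=
    fun j q => u j q.1 - w j q.2 - ‖q.1 - q.2‖^2/(2*ε) with hΦdef
  have hΦapp : ∀ j q, Φ j q = u j q.1 - w j q.2 - ‖q.1 - q.2‖^2/(2*ε) := fun j q => rfl
  have hΦapp' : ∀ j (a b : Euc N), Φ j (a, b) = u j a - w j b - ‖a - b‖^2/(2*ε) :=
    fun j a b => rfl
  have hΦc : ∀ j, Continuous (Φ j) := fun j =>
    (((huc j).comp continuous_fst).sub ((hwc j).comp continuous_snd)).sub
      (((continuous_fst.sub continuous_snd).norm.pow 2).div_const _)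
  clear_value Φ
  have hzmax : ∀ j, ∃ z ∈ D, ∀ q ∈ D, Φ j q ≤ Φ j z := by
    intro j
    obtain ⟨z, hz, hzm⟩ := hDcomp.exists_isMaxOn hDne (hΦc j).continuousOn
    exact ⟨z, hz, fun q hq => hzm hq⟩
  choose zf hzfD hzfmax using hzmax
  obtain ⟨ib, _, hib⟩ := Finset.exists_max_image Finset.univ (fun j => Φ j (zf j)) hne
  set xb : Euc N := (zf ib).1 with hxbdef
  set yb : Euc N := (zf ib).2 with hybdef
  have hzb : zf ib = (xb, yb) := rfl
  clear_value xb yb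
  have hxbball : ‖xb‖ ≤ Real.sqrt N := by
    have h := (hzfD ib).1
    rw [hzb] at h
    simpa [mem_closedBall_zero_iff] using h
  have hybball : ‖yb‖ ≤ Real.sqrt N + 1 := by
    have h := (hzfD ib).2
    rw [hzb] at h
    simpa [mem_closedBall_zero_iff] using h
  have hΦm : Φ ib (zf ib) = u ib xb - w ib yb - ‖xb - yb‖^2/(2*ε) := by
    rw [hzb, hΦapp']
  -- θ is below the max value
  have hθΦ : θ ≤ Φ ib (zf ib) := by
    have hmem : (x₀, x₀) ∈ D := by
      refine ⟨?_, ?_⟩ <;> simp only [Metric.mem_closedBall, dist_zero_right]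
      · exact hx₀ball
      · linarith
    have hv : Φ i₀ (x₀, x₀) = θ := by
      rw [hΦapp', hθdef]
      simp
    calc θ = Φ i₀ (x₀, x₀) := hv.symm
      _ ≤ Φ i₀ (zf i₀) := hzfmax i₀ _ hmem
      _ ≤ Φ ib (zf ib) := hib i₀ (Finset.mem_univ _)
  -- global maximality
  have hglob : ∀ j q, Φ j q ≤ Φ ib (zf ib) := by
    intro j q
    obtain ⟨q1, q2⟩ := q
    by_cases hq : ‖q1 - q2‖ ≤ 1
    · obtain ⟨k, hk⟩ := exists_shift q1
      have hval : Φ j (q1 + emb N k, q2 + emb N k) = Φ j (q1, q2) := by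
        rw [hΦapp', hΦapp']
        have h1 : u j (q1 + emb N k) = u j q1 := zper_apply (hup j) _ _
        have h2 : w j (q2 + emb N k) = w j q2 := zper_apply (hwp j) _ _
        have hid : q1 + emb N k - (q2 + emb N k) = q1 - q2 := by abel
        rw [hid, h1, h2]
      have hmem : (q1 + emb N k, q2 + emb N k) ∈ D := by
        refine ⟨?_, ?_⟩ <;> simp only [Metric.mem_closedBall, dist_zero_right]
        · exact hk
        · have heq : q2 + emb N k = (q1 + emb N k) + (q2 - q1) := by abel
          rw [heq]
          calc ‖(q1 + emb N k) + (q2 - q1)‖ ≤ ‖q1 + emb N k‖ + ‖q2 - q1‖ :=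
                norm_add_le _ _
            _ ≤ Real.sqrt N + 1 := by
              rw [norm_sub_rev]
              exact add_le_add hk hq
      calc Φ j (q1, q2) = Φ j (q1 + emb N k, q2 + emb N k) := hval.symm
        _ ≤ Φ j (zf j) := hzfmax j _ hmem
        _ ≤ Φ ib (zf ib) := hib j (Finset.mem_univ _)
    · push_neg at hq
      have hsq1 : 1 ≤ ‖q1 - q2‖^2 := by nlinarith
      have hmono : 1/(2*ε) ≤ ‖q1 - q2‖^2/(2*ε) := by gcongr
      have h1 : Φ j (q1, q2) ≤ Mu + Mw - 1/(2*ε) := by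
        have h2 := hMu j q1
        have h3 := hMw j q2
        rw [hΦapp']
        linarith
      linarith
  -- penalty bound
  have hpennn : (0:ℝ) ≤ ‖xb - yb‖^2/(2*ε) := by positivity
  have hpen : ‖xb - yb‖ ≤ 2*κ*ε := by
    rcases hLip with hL | hL
    · have hg := hglob ib (yb, yb)
      rw [hΦm, hΦapp'] at hg
      rw [sub_self, norm_zero] at hg
      have hz : (0:ℝ)^2/(2*ε) = 0 := by simp
      rw [hz] at hg
      have hLu := hL ib xb yb
      rcases eq_or_lt_of_le (norm_nonneg (xb - yb)) with h | h
      · rw [← h]; positivity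
      · have hq : ‖xb - yb‖^2/(2*ε) ≤ κ * ‖xb - yb‖ := by linarith
        have h2 : ‖xb - yb‖^2 ≤ κ * ‖xb - yb‖ * (2*ε) := (div_le_iff₀ (by positivity)).mp hq
        have h3 : ‖xb - yb‖ * ‖xb - yb‖ ≤ (2*κ*ε) * ‖xb - yb‖ := by
          have he : ‖xb - yb‖ * ‖xb - yb‖ = ‖xb - yb‖^2 := by ring
          have he2 : κ * ‖xb - yb‖ * (2*ε) = (2*κ*ε) * ‖xb - yb‖ := by ring
          linarith [he.le, he.ge, he2.le, he2.ge]
        exact le_of_mul_le_mul_right h3 h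
    · have hg := hglob ib (xb, xb)
      rw [hΦm, hΦapp'] at hg
      rw [sub_self, norm_zero] at hg
      have hz : (0:ℝ)^2/(2*ε) = 0 := by simp
      rw [hz] at hg
      have hLw := hL ib xb yb
      rcases eq_or_lt_of_le (norm_nonneg (xb - yb)) with h | h
      · rw [← h]; positivity
      · have hq : ‖xb - yb‖^2/(2*ε) ≤ κ * ‖xb - yb‖ := by linarith
        have h2 : ‖xb - yb‖^2 ≤ κ * ‖xb - yb‖ * (2*ε) := (div_le_iff₀ (by positivity)).mp hq
        have h3 : ‖xb - yb‖ * ‖xb - yb‖ ≤ (2*κ*ε) * ‖xb - yb‖ := by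
          have he : ‖xb - yb‖ * ‖xb - yb‖ = ‖xb - yb‖^2 := by ring
          have he2 : κ * ‖xb - yb‖ * (2*ε) = (2*κ*ε) * ‖xb - yb‖ := by ring
          linarith [he.le, he.ge, he2.le, he2.ge]
        exact le_of_mul_le_mul_right h3 h
  -- the vector in both (co)differentials
  set pb : Euc N := (1/ε) • (xb - yb) with hpbdef
  have hipgen : ∀ z : Euc N, ⟪pb, z⟫ = (1/ε) * ⟪xb - yb, z⟫ := fun z => by
    rw [hpbdef]; exact real_inner_smul_left _ _ _
  have hpbnorm : ‖pb‖ ≤ 2*κ := by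
    rw [hpbdef, norm_smul, Real.norm_eq_abs, abs_of_pos (by positivity)]
    calc (1/ε) * ‖xb - yb‖ ≤ (1/ε) * (2*κ*ε) :=
          mul_le_mul_of_nonneg_left hpen (by positivity)
      _ = 2*κ := by field_simp
  clear_value pb
  have hpsup : InSuperDiff (u ib) xb pb := by
    intro ε₂ hε₂
    refine ⟨2*ε*ε₂, by positivity, fun y' hy' => ?_⟩
    have hg := hglob ib (y', yb)
    rw [hΦm, hΦapp'] at hg
    have h1 : u ib y' - u ib xb ≤ (‖y' - yb‖^2 - ‖xb - yb‖^2)/(2*ε) := by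
      rw [← div_sub_div_same]
      linarith
    have hexp : ‖y' - yb‖^2 = ‖xb - yb‖^2 + 2*⟪xb - yb, y' - xb⟫ + ‖y' - xb‖^2 := by
      have hab : y' - yb = (xb - yb) + (y' - xb) := by abel
      rw [hab, norm_add_sq_real]
    have heq : (‖xb - yb‖^2 + 2*⟪xb - yb, y' - xb⟫ + ‖y' - xb‖^2 - ‖xb - yb‖^2)/(2*ε)
        = (1/ε) * ⟪xb - yb, y' - xb⟫ + ‖y' - xb‖^2/(2*ε) := by
      field_simp
      ring
    have hd : dist y' xb = ‖y' - xb‖ := dist_eq_norm _ _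
    rw [hd]
    rw [hd] at hy'
    have hmain : u ib y' - u ib xb - ⟪pb, y' - xb⟫ ≤ ‖y' - xb‖^2/(2*ε) := by
      rw [hipgen]
      rw [hexp] at h1
      linarith [heq.le, heq.ge]
    have hsmall : ‖y' - xb‖^2/(2*ε) ≤ ε₂ * ‖y' - xb‖ := by
      rw [div_le_iff₀ (by positivity)]
      nlinarith [norm_nonneg (y' - xb)]
    linarith
  have hpsub : InSubDiff (w ib) yb pb := by
    intro ε₂ hε₂
    refine ⟨2*ε*ε₂, by positivity, fun y' hy' => ?_⟩
    have hg := hglob ib (xb, y')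
    rw [hΦm, hΦapp'] at hg
    have h1 : (‖xb - yb‖^2 - ‖xb - y'‖^2)/(2*ε) ≤ w ib y' - w ib yb := by
      rw [← div_sub_div_same]
      linarith
    have hexp : ‖xb - y'‖^2 = ‖xb - yb‖^2 - 2*⟪xb - yb, y' - yb⟫ + ‖y' - yb‖^2 := by
      have hab : xb - y' = (xb - yb) - (y' - yb) := by abel
      rw [hab, norm_sub_sq_real]
    have heq : (‖xb - yb‖^2 - (‖xb - yb‖^2 - 2*⟪xb - yb, y' - yb⟫ + ‖y' - yb‖^2))/(2*ε)
        = (1/ε) * ⟪xb - yb, y' - yb⟫ - ‖y' - yb‖^2/(2*ε) := by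
      field_simp
      ring
    have hd : dist y' yb = ‖y' - yb‖ := dist_eq_norm _ _
    rw [hd]
    rw [hd] at hy'
    have hmain : -(‖y' - yb‖^2/(2*ε)) ≤ w ib y' - w ib yb - ⟪pb, y' - yb⟫ := by
      rw [hipgen]
      rw [hexp] at h1
      linarith [heq.le, heq.ge]
    have hsmall : ‖y' - yb‖^2/(2*ε) ≤ ε₂ * ‖y' - yb‖ := by
      rw [div_le_iff₀ (by positivity)]
      nlinarith [norm_nonneg (y' - yb)]
    linarith
  -- index comparison at the maximum point
  have hidx : ∀ j, u j xb - w j yb ≤ u ib xb - w ib yb := by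
    intro j
    have hg := hglob j (xb, yb)
    rw [hΦm, hΦapp'] at hg
    linarith
  -- viscosity inequalities
  have h1 := huvis xb ib pb hpsup
  have h2 := hwvis yb ib pb hpsub
  -- coupling inequality
  have hB : B.mulVec (fun j => w j yb) ib ≤ B.mulVec (fun j => u j xb) ib := by
    rw [mulVec_eq, mulVec_eq]
    have hterm : ∀ j, B ib j * (u ib xb - w ib yb) ≤ B ib j * (u j xb - w j yb) := by
      intro j
      by_cases hji : j = ib
      · subst hji; exact le_refl _
      · exact mul_le_mul_of_nonpos_left (hidx j) (hBoff ib j (fun h => hji h.symm))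
    have hsum := Finset.sum_le_sum (fun j (_ : j ∈ Finset.univ) => hterm j)
    have hleft : ∑ j, B ib j * (u ib xb - w ib yb) = 0 := by
      rw [← Finset.sum_mul, hBrow]
      ring
    have hright : ∑ j, B ib j * (u j xb - w j yb)
        = ∑ j, B ib j * u j xb - ∑ j, B ib j * w j yb := by
      rw [← Finset.sum_sub_distrib]
      exact Finset.sum_congr rfl (fun j _ => by ring)
    rw [hleft, hright] at hsum
    linarith
  -- uniform continuity estimate
  have hxbS : (xb, pb) ∈ S := by
    refine ⟨?_, ?_⟩ <;> simp only [Metric.mem_closedBall, dist_zero_right]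
    · linarith
    · exact hpbnorm
  have hybS : (yb, pb) ∈ S := by
    refine ⟨?_, ?_⟩ <;> simp only [Metric.mem_closedBall, dist_zero_right]
    · exact hybball
    · exact hpbnorm
  have hdistS : dist (xb, pb) (yb, pb) < δf ib := by
    have hd : dist (xb, pb) (yb, pb) = dist xb yb := by
      rw [Prod.dist_eq, dist_self]
      exact max_eq_left dist_nonneg
    rw [hd, dist_eq_norm]
    calc ‖xb - yb‖ ≤ 2*κ*ε := hpen
      _ < δ' := hεδ'
      _ ≤ δf ib := hδ'le ib
  have hH := hδf ib (xb, pb) hxbS (yb, pb) hybS hdistS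
  simp only at hH
  rw [Real.dist_eq] at hH
  have hHd : H ib yb pb - H ib xb pb < lam * θ / 2 := by
    have habs := abs_lt.mp hH
    linarith [habs.1]
  -- conclusion
  have hθub : θ ≤ u ib xb - w ib yb := by
    have h3 := hθΦ
    rw [hΦm] at h3
    linarith
  have hlam2 : lam * θ ≤ lam * (u ib xb - w ib yb) :=
    mul_le_mul_of_nonneg_left hθub hlam.le
  have hpos : 0 < lam * θ := by positivity
  linarith


lemma lam_upper [NeZero m] {H : Fin m → Euc N → Euc N → ℝ} {B : Matrix (Fin m) (Fin m) ℝ}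
    {α β : ℝ → ℝ} (hpin : ∀ i x p, α ‖p‖ ≤ H i x p ∧ H i x p ≤ β ‖p‖)
    (hBoff : ∀ i j, i ≠ j → B i j ≤ 0) (hBrow : ∀ i, ∑ j, B i j = 0)
    {lam c : ℝ} (hlam : 0 ≤ lam) {u : Fin m → Euc N → ℝ} (hu : IsSubsol H B lam c u) :
    ∀ i x, lam * u i x ≤ c - α 0 := by
  obtain ⟨i₀, x₀, _, hmax⟩ := exists_max_pair hu.1 hu.2.1
  have h0 : InSuperDiff (u i₀) x₀ 0 := superdiff_zero_of_max (fun y => hmax i₀ y)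
  have hvis := hu.2.2 x₀ i₀ 0 h0
  have hB : (0:ℝ) ≤ B.mulVec (fun j => u j x₀) i₀ := by
    rw [mulVec_eq]
    have hterm : ∀ j, B i₀ j * u i₀ x₀ ≤ B i₀ j * u j x₀ := fun j => by
      by_cases hji : j = i₀
      · subst hji; exact le_refl _
      · exact mul_le_mul_of_nonpos_left (hmax j x₀) (hBoff i₀ j (fun h => hji h.symm))
    have hsum := Finset.sum_le_sum (fun j (_ : j ∈ Finset.univ) => hterm j)
    have hleft : ∑ j, B i₀ j * u i₀ x₀ = 0 := by rw [← Finset.sum_mul, hBrow]; ring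
    linarith
  have hα0 : α 0 ≤ H i₀ x₀ 0 := by
    have h := (hpin i₀ x₀ 0).1
    rwa [norm_zero] at h
  intro i x
  have h := mul_le_mul_of_nonneg_left (hmax i x) hlam
  linarith

lemma lam_lower [NeZero m] {H : Fin m → Euc N → Euc N → ℝ} {B : Matrix (Fin m) (Fin m) ℝ}
    {α β : ℝ → ℝ} (hpin : ∀ i x p, α ‖p‖ ≤ H i x p ∧ H i x p ≤ β ‖p‖)
    (hBoff : ∀ i j, i ≠ j → B i j ≤ 0) (hBrow : ∀ i, ∑ j, B i j = 0)
    {lam c : ℝ} (hlam : 0 ≤ lam) {u : Fin m → Euc N → ℝ} (hu : IsSupersol H B lam c u) :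
    ∀ i x, c - β 0 ≤ lam * u i x := by
  obtain ⟨i₀, x₀, _, hmax⟩ := exists_max_pair (fun i => (hu.1 i).neg)
    (fun i x k => by simp only [Pi.neg_apply]; rw [hu.2.1 i x k])
  have hmin : ∀ i x, u i₀ x₀ ≤ u i x := fun i x => by have := hmax i x; simp only [Pi.neg_apply] at this; linarith
  have h0 : InSubDiff (u i₀) x₀ 0 := subdiff_zero_of_min (fun y => hmin i₀ y)
  have hvis := hu.2.2 x₀ i₀ 0 h0
  have hB : B.mulVec (fun j => u j x₀) i₀ ≤ 0 := by
    rw [mulVec_eq]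
    have hterm : ∀ j, B i₀ j * u j x₀ ≤ B i₀ j * u i₀ x₀ := fun j => by
      by_cases hji : j = i₀
      · subst hji; exact le_refl _
      · exact mul_le_mul_of_nonpos_left (hmin j x₀) (hBoff i₀ j (fun h => hji h.symm))
    have hsum := Finset.sum_le_sum (fun j (_ : j ∈ Finset.univ) => hterm j)
    have hright : ∑ j, B i₀ j * u i₀ x₀ = 0 := by rw [← Finset.sum_mul, hBrow]; ring
    linarith
  have hβ0 : H i₀ x₀ 0 ≤ β 0 := by
    have h := (hpin i₀ x₀ 0).2
    rwa [norm_zero] at h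
  intro i x
  have h := mul_le_mul_of_nonneg_left (hmin i x) hlam
  linarith

lemma bound_from_coercive {α : ℝ → ℝ} (hα : Filter.Tendsto α Filter.atTop Filter.atTop) (A : ℝ) :
    ∃ R ≥ 0, ∀ r, 0 ≤ r → α r ≤ A → r ≤ R := by
  obtain ⟨r₀, hr₀⟩ := Filter.eventually_atTop.mp (hα.eventually_ge_atTop (A+1))
  refine ⟨max r₀ 0, le_max_right _ _, fun r _ hA => ?_⟩
  by_contra hcon
  push_neg at hcon
  have h := hr₀ r (le_of_lt (lt_of_le_of_lt (le_max_left _ _) hcon))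
  linarith

lemma mulVec_abs_le [NeZero m] (B : Matrix (Fin m) (Fin m) ℝ) (z : Fin m → ℝ) (i : Fin m)
    {Z : ℝ} (hz : ∀ j, |z j| ≤ Z) :
    |B.mulVec z i| ≤ (∑ i', ∑ j, |B i' j|) * Z := by
  have hZ0 : 0 ≤ Z := le_trans (abs_nonneg _) (hz (Classical.arbitrary _))
  rw [mulVec_eq]
  calc |∑ j, B i j * z j| ≤ ∑ j, |B i j * z j| := Finset.abs_sum_le_sum_abs _ _
    _ ≤ ∑ j, |B i j| * Z := Finset.sum_le_sum
        (fun j _ => by rw [abs_mul]; exact mul_le_mul_of_nonneg_left (hz j) (abs_nonneg _))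
    _ = (∑ j, |B i j|) * Z := (Finset.sum_mul _ _ _).symm
    _ ≤ (∑ i', ∑ j, |B i' j|) * Z := by
      refine mul_le_mul_of_nonneg_right ?_ hZ0
      exact Finset.single_le_sum
        (f := fun i' => ∑ j, |B i' j|)
        (fun i' _ => Finset.sum_nonneg (fun j _ => abs_nonneg _)) (Finset.mem_univ i)

lemma supersol_shift {H : Fin m → Euc N → Euc N → ℝ} {B : Matrix (Fin m) (Fin m) ℝ}
    (hBrow : ∀ i, ∑ j, B i j = 0) {c : ℝ} {v : Fin m → Euc N → ℝ}
    (hv : IsSupersol H B 0 c v) {V lam : ℝ} (hlam : 0 ≤ lam)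
    (hVlb : ∀ i x, 0 ≤ v i x + V) :
    IsSupersol H B lam c (fun i x => v i x + V) := by
  obtain ⟨hvc, hvp, hvvis⟩ := hv
  refine ⟨fun i => (hvc i).add continuous_const,
    fun i x k => by simp only; rw [hvp i x k], ?_⟩
  intro x i p hp
  have hp' : InSubDiff (v i) x p := by
    intro ε hε
    obtain ⟨δ, hδ, hd⟩ := hp ε hε
    refine ⟨δ, hδ, fun y hy => ?_⟩
    have h := hd y hy
    simp only at h
    linarith
  have h1 := hvvis x i p hp'
  have hmv : B.mulVec (fun j => v j x + V) i = B.mulVec (fun j => v j x) i := by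
    rw [mulVec_eq, mulVec_eq]
    rw [Finset.sum_congr rfl (fun j (_ : j ∈ Finset.univ) =>
      (by ring : B i j * (v j x + V) = B i j * v j x + B i j * V))]
    rw [Finset.sum_add_distrib, ← Finset.sum_mul, hBrow]
    ring
  simp only
  rw [hmv]
  have h2 : 0 ≤ lam * (v i x + V) := mul_nonneg hlam (hVlb i x)
  linarith

lemma subsol_shift {H : Fin m → Euc N → Euc N → ℝ} {B : Matrix (Fin m) (Fin m) ℝ}
    (hBrow : ∀ i, ∑ j, B i j = 0) {c : ℝ} {v : Fin m → Euc N → ℝ}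
    (hv : IsSubsol H B 0 c v) {V lam : ℝ} (hlam : 0 ≤ lam)
    (hVub : ∀ i x, v i x - V ≤ 0) :
    IsSubsol H B lam c (fun i x => v i x - V) := by
  obtain ⟨hvc, hvp, hvvis⟩ := hv
  refine ⟨fun i => (hvc i).sub continuous_const,
    fun i x k => by simp only; rw [hvp i x k], ?_⟩
  intro x i p hp
  have hp' : InSuperDiff (v i) x p := by
    intro ε hε
    obtain ⟨δ, hδ, hd⟩ := hp ε hε
    refine ⟨δ, hδ, fun y hy => ?_⟩
    have h := hd y hy
    simp only at h
    linarith
  have h1 := hvvis x i p hp'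
  have hmv : B.mulVec (fun j => v j x - V) i = B.mulVec (fun j => v j x) i := by
    rw [mulVec_eq, mulVec_eq]
    rw [Finset.sum_congr rfl (fun j (_ : j ∈ Finset.univ) =>
      (by ring : B i j * (v j x - V) = B i j * v j x - B i j * V))]
    rw [Finset.sum_sub_distrib, ← Finset.sum_mul, hBrow]
    ring
  simp only
  rw [hmv]
  have h2 : lam * (v i x - V) ≤ 0 := mul_nonpos_of_nonneg_of_nonpos hlam (hVub i x)
  linarith

end Disc


/-- The discounted solutions `u^λ` are equi-bounded and equi-Lipschitz; in particular
`‖λ u^λ‖_∞ → 0` as `λ → 0⁺`. -/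
theorem discounted_equibounded_equilipschitz
    {N m : ℕ} (hN : 1 ≤ N) (hm : 1 ≤ m)
    (H : Fin m → Euc N → Euc N → ℝ) (B : Matrix (Fin m) (Fin m) ℝ) (α β : ℝ → ℝ)
    (hst : Standing H B α β)
    (hα : Tendsto α atTop atTop) (hβ : Tendsto β atTop atTop)
    (hcrit : ∃ u, IsSol H B 0 (critVal H B) u)
    (ulam : ℝ → Fin m → Euc N → ℝ)
    (hsol : ∀ lam, 0 < lam → IsSol H B lam (critVal H B) (ulam lam))
    (huniq : ∀ lam, 0 < lam → ∀ v, IsSol H B lam (critVal H B) v → v = ulam lam)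
    :
    (∃ K : ℝ, ∃ κ : NNReal,
      (∀ lam, 0 < lam → ∀ (i : Fin m) (x : Euc N), |ulam lam i x| ≤ K) ∧
      (∀ lam, 0 < lam → ∀ i : Fin m, LipschitzWith κ (ulam lam i))) ∧
    (∀ ε > 0, ∃ δ > 0, ∀ lam, 0 < lam → lam < δ →
      ∀ (i : Fin m) (x : Euc N), |lam * ulam lam i x| < ε) := by
  obtain ⟨hHc, hHper, hHconv, hpin, hBoff, hBrow, hirr⟩ := hst
  haveI : NeZero m := ⟨by omega⟩
  obtain ⟨v, hvsub, hvsuper⟩ := hcrit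
  -- a bound on the critical solution
  obtain ⟨iv, xv, _, hvmax⟩ := Disc.exists_max_pair hvsub.1 hvsub.2.1
  obtain ⟨iv2, xv2, _, hvmin'⟩ := Disc.exists_max_pair (fun i => (hvsub.1 i).neg)
    (fun i x k => by simp only [Pi.neg_apply]; rw [hvsub.2.1 i x k])
  set V : ℝ := max (max (v iv xv) (-(v iv2 xv2))) 0 with hVdef
  have hV0 : 0 ≤ V := le_max_right _ _
  have hVub : ∀ i x, v i x ≤ V := fun i x =>
    le_trans (hvmax i x) (le_trans (le_max_left _ _) (le_max_left _ _))
  have hVlb : ∀ i x, -V ≤ v i x := fun i x => by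
    have h1 := hvmin' i x
    simp only [Pi.neg_apply] at h1
    have h2 : -(v iv2 xv2) ≤ V := le_trans (le_max_right _ _) (le_max_left _ _)
    linarith
  clear_value V
  have hvabs : ∀ i x, |v i x| ≤ V := fun i x => abs_le.mpr ⟨hVlb i x, hVub i x⟩
  have hBv : ∀ (x : Euc N) (i : Fin m),
      |B.mulVec (fun j => v j x) i| ≤ (∑ i', ∑ j, |B i' j|) * V := fun x i =>
    Disc.mulVec_abs_le B _ i (fun j => hvabs j x)
  -- Lipschitz bound for the critical solution
  obtain ⟨Rv, hRv0, hRv⟩ := Disc.bound_from_coercive hα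
    (critVal H B + (∑ i', ∑ j, |B i' j|) * V)
  have hvD : ∀ i x p, InSuperDiff (v i) x p → ‖p‖ ≤ Rv := by
    intro i x p hp
    have h1 := hvsub.2.2 x i p hp
    have h2 := (hpin i x p).1
    have h4 := abs_le.mp (hBv x i)
    refine hRv _ (norm_nonneg _) ?_
    linarith [h4.1]
  have hvlip : ∀ i (x y : Euc N), v i x - v i y ≤ Rv * ‖x - y‖ := by
    intro i x y
    have h := (Disc.lipschitz_of_superdiff_bound (hvsub.1 i) (hvsub.2.1 i)
      hRv0 (hvD i)).dist_le_mul x y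
    rw [Real.dist_eq, Real.coe_toNNReal _ hRv0, dist_eq_norm] at h
    exact le_trans (le_abs_self _) h
  -- uniform bound on the discounted solutions
  have hbound : ∀ lam, 0 < lam → ∀ (i : Fin m) (x : Euc N), |ulam lam i x| ≤ 2*V := by
    intro lam hlam i x
    obtain ⟨husub, husuper⟩ := hsol lam hlam
    have hupper : ∀ (i : Fin m) (x : Euc N), ulam lam i x ≤ v i x + V := by
      have hw : IsSupersol H B lam (critVal H B) (fun i x => v i x + V) :=
        Disc.supersol_shift hBrow hvsuper hlam.le (fun i x => by linarith [hVlb i x])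
      have hLipw : ∀ i (x y : Euc N), (v i x + V) - (v i y + V) ≤ Rv * ‖x - y‖ := by
        intro i x y
        have h := hvlip i x y
        linarith
      exact Disc.comparison H B hHc hBoff hBrow hlam husub hw hRv0 (Or.inr hLipw)
    have hlower : ∀ (i : Fin m) (x : Euc N), v i x - V ≤ ulam lam i x := by
      have hwsub : IsSubsol H B lam (critVal H B) (fun i x => v i x - V) :=
        Disc.subsol_shift hBrow hvsub hlam.le (fun i x => by linarith [hVub i x])
      have hLipw : ∀ i (x y : Euc N), (v i x - V) - (v i y - V) ≤ Rv * ‖x - y‖ := by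
        intro i x y
        have h := hvlip i x y
        linarith
      exact Disc.comparison H B hHc hBoff hBrow hlam hwsub husuper hRv0 (Or.inl hLipw)
    have h1 := hupper i x
    have h2 := hlower i x
    have h3 := hVub i x
    have h4 := hVlb i x
    rw [abs_le]
    constructor <;> linarith
  -- equi-Lipschitz bound
  obtain ⟨R₁, hR₁0, hR₁⟩ := Disc.bound_from_coercive hα
    ((∑ i', ∑ j, |B i' j|) * (2*V) + β 0)
  have hlip : ∀ lam, 0 < lam → ∀ i : Fin m, LipschitzWith R₁.toNNReal (ulam lam i) := by
    intro lam hlam i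
    obtain ⟨husub, husuper⟩ := hsol lam hlam
    have hlamlow := Disc.lam_lower hpin hBoff hBrow hlam.le husuper
    refine Disc.lipschitz_of_superdiff_bound (husub.1 i) (husub.2.1 i) hR₁0 ?_
    intro x p hp
    have h1 := husub.2.2 x i p hp
    have h2 := (hpin i x p).1
    have h3 : |B.mulVec (fun j => ulam lam j x) i| ≤ (∑ i', ∑ j, |B i' j|) * (2*V) :=
      Disc.mulVec_abs_le B _ i (fun j => hbound lam hlam j x)
    have h4 := abs_le.mp h3
    have h5 := hlamlow i x
    refine hR₁ _ (norm_nonneg _) ?_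
    linarith [h4.1]
  refine ⟨⟨2*V, R₁.toNNReal, hbound, hlip⟩, ?_⟩
  intro ε hε
  have h2V1 : (0:ℝ) < 2*V+1 := by linarith
  refine ⟨ε/(2*V+1), div_pos hε h2V1, fun lam hlam hlamδ i x => ?_⟩
  have h1 := hbound lam hlam i x
  have habs : |lam * ulam lam i x| = lam * |ulam lam i x| := by
    rw [abs_mul, abs_of_pos hlam]
  rw [habs]
  calc lam * |ulam lam i x| ≤ lam * (2*V) := mul_le_mul_of_nonneg_left h1 hlam.le
    _ < (ε/(2*V+1)) * (2*V+1) := by nlinarith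
    _ = ε := by field_simp
end
end

section
/- Let c ∈ ℝ and let u : M → ℝ^m be a Lipschitz continuous viscosity subsolution of Bu + H(x, Du) = c𝟙. Then for every ε > 0 there exists a C¹ function w = (w_1,…,w_m) : M → ℝ^m such that (Bw(x))_i + H_i(x, Dw_i(x)) ≤ c + ε for every x ∈ M and every i ∈ {1,…,m}. -/
open scoped RealInnerProductSpace
open Filter MeasureTheory Set

noncomputable section

namespace SmoothAux

open Metric Topology

variable {N : ℕ}

abbrev embZ {N : ℕ} (k : Fin N → ℤ) : Euc N :=
  (WithLp.equiv 2 (Fin N → ℝ)).symm (fun i => (k i : ℝ))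

lemma norm_le_sqrt {v : Euc N} (h : ∀ i, |v i| ≤ 1) : ‖v‖ ≤ Real.sqrt N := by
  rw [EuclideanSpace.norm_eq]
  apply Real.sqrt_le_sqrt
  calc ∑ i, ‖v i‖ ^ 2 ≤ ∑ _i : Fin N, (1 : ℝ) := by
        apply Finset.sum_le_sum
        intro i _
        rw [Real.norm_eq_abs]
        exact pow_le_one₀ (abs_nonneg _) (h i)
    _ = N := by simp

lemma exists_near (z : Euc N) : ∃ k : Fin N → ℤ, ‖z - embZ k‖ ≤ Real.sqrt N := by
  refine ⟨fun i => ⌊z i⌋, norm_le_sqrt fun i => ?_⟩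
  have hc : (z - embZ (fun i => ⌊z i⌋)) i = z i - ⌊z i⌋ := by
    simp [PiLp.sub_apply, WithLp.equiv_symm_apply, PiLp.toLp_apply]
  rw [hc, abs_le]
  constructor
  · linarith [Int.fract_nonneg (z i), (Int.self_sub_floor (z i))]
  · linarith [(Int.fract_lt_one (z i)), (Int.self_sub_floor (z i))]

lemma periodic_shift {f : Euc N → ℝ} (hf : ZPeriodic f) (z : Euc N) (k : Fin N → ℤ) :
    f (z - embZ k) = f z := by
  have h := hf (z - embZ k) k
  rw [sub_add_cancel] at h
  exact h.symm
lemma modulus (F : Euc N → Euc N → ℝ) (hc : Continuous fun q : Euc N × Euc N => F q.1 q.2)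
    (hper : ∀ p, ZPeriodic fun z => F z p) (K : ℝ) {ε : ℝ} (hε : 0 < ε) :
    ∃ δ, 0 < δ ∧ δ ≤ 1 ∧ ∀ z z' p, ‖p‖ ≤ K → dist z z' ≤ δ → F z' p ≤ F z p + ε := by
  set S : Set (Euc N × Euc N) := closedBall 0 (Real.sqrt N + 1) ×ˢ closedBall 0 K with hS
  have hScpt : IsCompact S := (isCompact_closedBall _ _).prod (isCompact_closedBall _ _)
  have hUC := hScpt.uniformContinuousOn_of_continuous hc.continuousOn
  rw [Metric.uniformContinuousOn_iff] at hUC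
  obtain ⟨δ0, hδ0, hUC⟩ := hUC ε hε
  refine ⟨min (δ0 / 2) 1, by positivity, min_le_right _ _, ?_⟩
  intro z z' p hp hdzz
  obtain ⟨k, hk⟩ := exists_near z
  have hzz' : ‖z' - z‖ ≤ 1 := by
    rw [← dist_eq_norm]
    exact le_trans (by rwa [dist_comm]) (min_le_right _ _)
  have hz'k : ‖z' - embZ k‖ ≤ Real.sqrt N + 1 := by
    calc ‖z' - embZ k‖ = ‖(z' - z) + (z - embZ k)‖ := by rw [sub_add_sub_cancel]
      _ ≤ ‖z' - z‖ + ‖z - embZ k‖ := norm_add_le _ _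
      _ ≤ Real.sqrt N + 1 := by linarith
  have hmem1 : ((z - embZ k, p) : Euc N × Euc N) ∈ S :=
    ⟨mem_closedBall_zero_iff.2 (le_trans hk (by linarith)), mem_closedBall_zero_iff.2 hp⟩
  have hmem2 : ((z' - embZ k, p) : Euc N × Euc N) ∈ S :=
    ⟨mem_closedBall_zero_iff.2 hz'k, mem_closedBall_zero_iff.2 hp⟩
  have hdist : dist ((z' - embZ k, p) : Euc N × Euc N) (z - embZ k, p) < δ0 := by
    rw [Prod.dist_eq]
    simp only [dist_self, dist_sub_right]
    have : dist z' z ≤ δ0 / 2 := le_trans (by rwa [dist_comm]) (min_le_left _ _)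
    calc max (dist z' z) 0 ≤ δ0 / 2 := by
          apply max_le this (by positivity)
      _ < δ0 := by linarith
  have h := hUC _ hmem2 _ hmem1 hdist
  rw [Real.dist_eq] at h
  have h1 : F (z' - embZ k) p = F z' p := periodic_shift (hper p) z' k
  have h2 : F (z - embZ k) p = F z p := periodic_shift (hper p) z k
  simp only [] at h
  rw [h1, h2] at h
  linarith [(abs_sub_lt_iff.mp h).1]

lemma bound (F : Euc N → Euc N → ℝ) (hc : Continuous fun q : Euc N × Euc N => F q.1 q.2)
    (hper : ∀ p, ZPeriodic fun z => F z p) (K : ℝ) :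
    ∃ C, ∀ z p, ‖p‖ ≤ K → |F z p| ≤ C := by
  set S : Set (Euc N × Euc N) := closedBall 0 (Real.sqrt N + 1) ×ˢ closedBall 0 K with hS
  have hScpt : IsCompact S := (isCompact_closedBall _ _).prod (isCompact_closedBall _ _)
  obtain ⟨C, hC⟩ := hScpt.exists_bound_of_continuousOn hc.continuousOn
  refine ⟨C, fun z p hp => ?_⟩
  obtain ⟨k, hk⟩ := exists_near z
  have hmem : ((z - embZ k, p) : Euc N × Euc N) ∈ S :=
    ⟨mem_closedBall_zero_iff.2 (le_trans hk (by linarith [Real.sqrt_nonneg (N:ℝ)])),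
      mem_closedBall_zero_iff.2 hp⟩
  have h := hC _ hmem
  simp only [Real.norm_eq_abs] at h
  rwa [periodic_shift (hper p) z k] at h

lemma bdd_of_lipschitz_periodic {u : Euc N → ℝ} {K : NNReal} (hL : LipschitzWith K u)
    (hp : ZPeriodic u) : ∃ C, ∀ z, |u z| ≤ C := by
  refine ⟨|u 0| + K * Real.sqrt N, fun z => ?_⟩
  obtain ⟨k, hk⟩ := exists_near z
  have h1 : u z = u (z - embZ k) := (periodic_shift hp z k).symm
  have h2 : |u (z - embZ k) - u 0| ≤ K * Real.sqrt N := by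
    have := hL.dist_le_mul (z - embZ k) 0
    rw [Real.dist_eq, dist_zero_right] at this
    exact le_trans this (by
      have := NNReal.coe_nonneg K
      nlinarith)
  calc |u z| = |u 0 + (u (z - embZ k) - u 0)| := by rw [h1]; ring_nf
    _ ≤ |u 0| + |u (z - embZ k) - u 0| := abs_add_le _ _
    _ ≤ |u 0| + K * Real.sqrt N := by linarith

lemma inner_gradient (f : Euc N → ℝ) (z v : Euc N) : ⟪gradient f z, v⟫ = fderiv ℝ f z v := by
  unfold gradient
  exact InnerProductSpace.toDual_symm_apply

lemma norm_gradient_le {u : Euc N → ℝ} {K : NNReal} (hL : LipschitzWith K u) (z : Euc N) :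
    ‖gradient u z‖ ≤ K := by
  have h : ‖gradient u z‖ = ‖fderiv ℝ u z‖ := by
    unfold gradient
    exact LinearIsometryEquiv.norm_map _ _
  rw [h]
  exact norm_fderiv_le_of_lipschitz ℝ hL

lemma measurable_gradient (u : Euc N → ℝ) : Measurable (fun z => gradient u z) := by
  have h : (fun z => gradient u z)
      = (fun L : StrongDual ℝ (Euc N) => (InnerProductSpace.toDual ℝ (Euc N)).symm L)
        ∘ (fderiv ℝ u) := rfl
  rw [h]
  exact ((InnerProductSpace.toDual ℝ (Euc N)).symm.continuous.measurable).comp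
    (measurable_fderiv ℝ u)

lemma insuper_of_diff {u : Euc N → ℝ} {z : Euc N} (h : DifferentiableAt ℝ u z) :
    ∀ ε > 0, ∃ δ > 0, ∀ y : Euc N, dist y z < δ →
      u y - u z - ⟪gradient u z, y - z⟫ ≤ ε * dist y z := by
  intro ε hε
  have hlo := h.hasFDerivAt.isLittleO
  rw [Asymptotics.isLittleO_iff] at hlo
  have hev := hlo hε
  rw [Metric.eventually_nhds_iff] at hev
  obtain ⟨δ, hδ, hev⟩ := hev
  refine ⟨δ, hδ, fun y hy => ?_⟩
  have := hev hy
  rw [inner_gradient]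
  calc u y - u z - fderiv ℝ u z (y - z) ≤ ‖u y - u z - fderiv ℝ u z (y - z)‖ :=
        le_abs_self _
    _ ≤ ε * ‖y - z‖ := this
    _ = ε * dist y z := by rw [dist_eq_norm]
lemma grad_conv (φ : Euc N → ℝ) (hφc : Continuous φ) (hφsupp : HasCompactSupport φ)
    (u : Euc N → ℝ) (K : NNReal) (hu : LipschitzWith K u) (x : Euc N)
    (hwd : DifferentiableAt ℝ (fun x : Euc N => ∫ y, φ y * u (x - y)) x) :
    gradient (fun x : Euc N => ∫ y, φ y * u (x - y)) x
      = ∫ y, φ y • gradient u (x - y) := by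
  set w : Euc N → ℝ := fun x => ∫ y, φ y * u (x - y) with hwdef
  set g : Euc N → Euc N := fun y => gradient u (x - y) with hgdef
  have hφi : Integrable φ volume := hφc.integrable_of_hasCompactSupport hφsupp
  have hgmeas : Measurable g :=
    (measurable_gradient u).comp (measurable_const.sub measurable_id)
  have hgbd : ∀ y, ‖g y‖ ≤ K := fun y => norm_gradient_le hu _
  have hint : Integrable (fun y => φ y • g y) volume := by
    refine Integrable.mono' (hφi.abs.mul_const (K : ℝ))
      ((hφc.measurable.smul hgmeas).aestronglyMeasurable) (ae_of_all _ fun y => ?_)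
    rw [norm_smul, Real.norm_eq_abs]
    exact mul_le_mul_of_nonneg_left (hgbd y) (abs_nonneg _)
  -- a.e. differentiability
  have hae : ∀ᵐ y ∂(volume : Measure (Euc N)), DifferentiableAt ℝ u (x - y) := by
    have h1 : ∀ᵐ z ∂(volume : Measure (Euc N)), DifferentiableAt ℝ u z :=
      hu.ae_differentiableAt
    have hmp : MeasurePreserving (fun y : Euc N => x - y) volume volume :=
      Measure.measurePreserving_sub_left volume x
    exact hmp.quasiMeasurePreserving.ae h1
  apply ext_inner_right ℝ
  intro v
  rw [inner_gradient]
  have hR : ⟪(∫ y, φ y • g y : Euc N), v⟫ = ∫ y, φ y * ⟪g y, v⟫ := by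
    rw [real_inner_comm, ← integral_inner hint v]
    congr 1
    funext y
    rw [real_inner_smul_right, real_inner_comm]
  rw [hR]
  -- both limits of difference quotients
  set l : Filter ℝ := 𝓝[≠] (0 : ℝ) with hl
  have hne : ∀ t : ℝ, t ∈ ({(0:ℝ)}ᶜ : Set ℝ) → t ≠ 0 := fun t ht => ht
  have hvnear : HasDerivAt (fun t : ℝ => x + t • v) v 0 := by
    have h := ((hasDerivAt_id (0 : ℝ)).smul_const v).const_add x
    simpa using h
  have h1 : Tendsto (fun t : ℝ => (w (x + t • v) - w x) / t) l (𝓝 (fderiv ℝ w x v)) := by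
    have hd : HasDerivAt (fun t : ℝ => w (x + t • v)) (fderiv ℝ w x v) 0 := by
      exact hwd.hasFDerivAt.comp_hasDerivAt_of_eq 0 hvnear (by simp)
    have h := hasDerivAt_iff_tendsto_slope.mp hd
    apply h.congr
    intro t
    simp [slope_def_field]
  have h2 : Tendsto (fun t : ℝ => (w (x + t • v) - w x) / t) l
      (𝓝 (∫ y, φ y * (fderiv ℝ u (x - y) v))) := by
    have hIc : ∀ z : Euc N, Integrable (fun y => φ y * u (z - y)) volume := by
      intro z
      apply Continuous.integrable_of_hasCompactSupport
      · exact hφc.mul (hu.continuous.comp (continuous_const.sub continuous_id))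
      · exact hφsupp.mul_right
    have heq : ∀ t : ℝ, t ≠ 0 →
        (w (x + t • v) - w x) / t = ∫ y, φ y * ((u (x + t • v - y) - u (x - y)) / t) := by
      intro t ht
      rw [hwdef]
      simp only []
      rw [← integral_sub (hIc (x + t • v)) (hIc x), ← integral_div]
      congr 1
      funext y
      rw [← mul_sub, mul_div_assoc]
    refine Tendsto.congr' ?_
      (tendsto_integral_filter_of_dominated_convergence
        (F := fun (t : ℝ) (y : Euc N) => φ y * ((u (x + t • v - y) - u (x - y)) / t))
        (f := fun y => φ y * (fderiv ℝ u (x - y) v))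
        (fun y => |φ y| * ((K : ℝ) * ‖v‖)) ?_ ?_ (hφi.abs.mul_const _) ?_)
    · filter_upwards [self_mem_nhdsWithin] with t ht
      exact (heq t ht).symm
    · filter_upwards with t
      have huc : Continuous u := hu.continuous
      have hcont : Continuous fun y : Euc N => φ y * ((u (x + t • v - y) - u (x - y)) / t) := by
        fun_prop
      exact hcont.aestronglyMeasurable
    · filter_upwards [self_mem_nhdsWithin] with t ht
      refine ae_of_all _ fun y => ?_
      have ht' : t ≠ 0 := ht
      have hlip := hu.dist_le_mul (x + t • v - y) (x - y)
      rw [Real.dist_eq] at hlip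
      have hdd : dist (x + t • v - y) (x - y) = |t| * ‖v‖ := by
        rw [dist_eq_norm]
        have : x + t • v - y - (x - y) = t • v := by abel
        rw [this, norm_smul, Real.norm_eq_abs]
      rw [hdd] at hlip
      have habs : |(u (x + t • v - y) - u (x - y)) / t| ≤ (K : ℝ) * ‖v‖ := by
        rw [abs_div]
        rw [div_le_iff₀ (abs_pos.mpr ht')]
        calc |u (x + t • v - y) - u (x - y)| ≤ (K : ℝ) * (|t| * ‖v‖) := hlip
          _ = (K : ℝ) * ‖v‖ * |t| := by ring
      rw [Real.norm_eq_abs, abs_mul]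
      exact mul_le_mul_of_nonneg_left habs (abs_nonneg _)
    · filter_upwards [hae] with y hy
      have hd : HasDerivAt (fun t : ℝ => u (x - y + t • v)) (fderiv ℝ u (x - y) v) 0 := by
        have hvnear' : HasDerivAt (fun t : ℝ => x - y + t • v) v 0 := by
          have h := ((hasDerivAt_id (0 : ℝ)).smul_const v).const_add (x - y)
          simpa using h
        exact hy.hasFDerivAt.comp_hasDerivAt_of_eq 0 hvnear' (by simp)
      have hsl := hasDerivAt_iff_tendsto_slope.mp hd
      have hsl' : Tendsto (fun t : ℝ => (u (x - y + t • v) - u (x - y)) / t) l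
          (𝓝 (fderiv ℝ u (x - y) v)) := by
        apply hsl.congr
        intro t
        simp [slope_def_field]
      have := hsl'.const_mul (φ y)
      apply this.congr
      intro t
      have hxy : x + t • v - y = x - y + t • v := by abel
      rw [hxy]
  have hgv : (∫ y, φ y * ⟪g y, v⟫) = ∫ y, φ y * (fderiv ℝ u (x - y) v) := by
    congr 1
    funext y
    rw [inner_gradient]
  rw [hgv]
  exact tendsto_nhds_unique h1 h2

end SmoothAux


/-- Smoothing of Lipschitz subsolutions: a Lipschitz viscosity subsolution of
`Bu + H(x,Du) = c𝟙` can be approximated by `C¹` functions that are subsolutions up to `ε`. -/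
theorem smooth_approximate_subsolution
    {N m : ℕ} (hN : 1 ≤ N) (hm : 1 ≤ m)
    (H : Fin m → Euc N → Euc N → ℝ) (B : Matrix (Fin m) (Fin m) ℝ) (α β : ℝ → ℝ)
    (hst : Standing H B α β)
    (hα : Tendsto α atTop atTop) (hβ : Tendsto β atTop atTop)
    (c : ℝ) (u : Fin m → Euc N → ℝ)
    (hu : IsSubsol H B 0 c u) (hLip : ∃ K : NNReal, ∀ i, LipschitzWith K (u i)) :
    ∀ ε > 0, ∃ w : Fin m → Euc N → ℝ,
      (∀ i, ContDiff ℝ 1 (w i)) ∧ (∀ i, ZPeriodic (w i)) ∧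
      ∀ (x : Euc N) (i : Fin m),
        B.mulVec (fun j => w j x) i + H i x (gradient (w i) x) ≤ c + ε := by
  intro ε hε
  obtain ⟨K, hK⟩ := hLip
  obtain ⟨hHc, hHper, hHconv, hHpinch, -, -, -⟩ := hst
  obtain ⟨hucont, huper, husub⟩ := hu
  haveI : Nonempty (Fin m) := Fin.pos_iff_nonempty.mp hm
  -- uniform modulus of continuity for the Hamiltonians
  have hmod : ∀ i : Fin m, ∃ δ, 0 < δ ∧ δ ≤ 1 ∧ ∀ z z' p, ‖p‖ ≤ (K : ℝ) → dist z z' ≤ δ →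
      H i z' p ≤ H i z p + ε := fun i =>
    SmoothAux.modulus (H i) (hHc i) (hHper i) (K : ℝ) hε
  choose δf hδpos hδ1 hδ using hmod
  set δ : ℝ := Finset.univ.inf' Finset.univ_nonempty δf with hδdef
  have hδpos' : 0 < δ := by
    rw [hδdef, Finset.lt_inf'_iff]
    exact fun i _ => hδpos i
  have hδle : ∀ i, δ ≤ δf i := fun i => Finset.inf'_le _ (Finset.mem_univ i)
  -- mollifier
  set φb : ContDiffBump (0 : Euc N) := ⟨δ / 2, δ, by positivity, by linarith⟩ with hφb
  set φ : Euc N → ℝ := φb.normed volume with hφdef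
  have hφc : Continuous φ := φb.continuous_normed
  have hφnn : ∀ y, 0 ≤ φ y := fun y => φb.nonneg_normed y
  have hφi : Integrable φ volume := φb.integrable_normed
  have hφsupp : HasCompactSupport φ := φb.hasCompactSupport_normed
  have hφint1 : ∫ y, φ y = 1 := φb.integral_normed
  have hφsupport : Function.support φ = Metric.ball (0 : Euc N) δ := φb.support_normed_eq
  -- the u_j are bounded
  have hubd : ∀ j, ∃ C, ∀ z, |u j z| ≤ C := fun j =>
    SmoothAux.bdd_of_lipschitz_periodic (hK j) (huper j)
  choose Cu hCu using hubd
  -- the mollified functions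
  set w : Fin m → Euc N → ℝ := fun i x => ∫ y, φ y * u i (x - y) with hwdef
  have hwint : ∀ (j : Fin m) (z : Euc N), Integrable (fun y => φ y * u j (z - y)) volume := by
    intro j z
    apply Continuous.integrable_of_hasCompactSupport
    · exact hφc.mul ((hucont j).comp (continuous_const.sub continuous_id))
    · exact hφsupp.mul_right
  have hwcd : ∀ i, ContDiff ℝ 1 (w i) := by
    intro i
    have hconv : w i = MeasureTheory.convolution φ (u i) (ContinuousLinearMap.lsmul ℝ ℝ)
        volume := by
      funext z
      rw [hwdef]
      simp only [MeasureTheory.convolution_def, ContinuousLinearMap.lsmul_apply, smul_eq_mul]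
    rw [hconv]
    exact hφsupp.contDiff_convolution_left _ φb.contDiff_normed ((hucont i).locallyIntegrable)
  refine ⟨w, hwcd, ?_, ?_⟩
  · -- periodicity of w
    intro i x k
    show (∫ y, φ y * u i (x + SmoothAux.embZ k - y)) = ∫ y, φ y * u i (x - y)
    congr 1
    funext y
    have hshift : x + SmoothAux.embZ k - y = (x - y) + SmoothAux.embZ k := by abel
    rw [hshift, huper i (x - y) k]
  · -- the approximate subsolution property
    intro x i
    set g : Euc N → Euc N := fun y => gradient (u i) (x - y) with hgdef
    have hgmeas : Measurable g :=
      (SmoothAux.measurable_gradient (u i)).comp (measurable_const.sub measurable_id)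
    have hgbd : ∀ y, ‖g y‖ ≤ (K : ℝ) := fun y => SmoothAux.norm_gradient_le (hK i) _
    set φn : Euc N → NNReal := fun y => Real.toNNReal (φ y) with hφndef
    have hφnmeas : Measurable φn := hφc.measurable.real_toNNReal
    set ν : Measure (Euc N) := volume.withDensity (fun y => (φn y : ENNReal)) with hνdef
    have keyR : ∀ h : Euc N → ℝ, ∫ y, h y ∂ν = ∫ y, φ y * h y := by
      intro h
      rw [hνdef, integral_withDensity_eq_integral_smul hφnmeas]
      congr 1
      funext y
      rw [NNReal.smul_def, Real.coe_toNNReal _ (hφnn y), smul_eq_mul]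
    have keyV : ∫ y, g y ∂ν = ∫ y, φ y • g y := by
      rw [hνdef, integral_withDensity_eq_integral_smul hφnmeas]
      congr 1
      funext y
      rw [NNReal.smul_def, Real.coe_toNNReal _ (hφnn y)]
    have hcoe : (fun y => ((φn y : ℝ))) = φ := by
      funext y
      exact Real.coe_toNNReal _ (hφnn y)
    haveI hνprob : IsProbabilityMeasure ν := by
      constructor
      rw [hνdef, withDensity_apply _ MeasurableSet.univ, setLIntegral_univ]
      have hint : Integrable (fun y => ((φn y : ℝ))) volume := by
        rw [hcoe]; exact hφi
      rw [lintegral_coe_eq_integral φn hint]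
      have h1 : ∫ y, ((φn y : ℝ)) = 1 := by rw [hcoe]; exact hφint1
      rw [h1, ENNReal.ofReal_one]
    have hball : ∀ᵐ y ∂ν, ‖y‖ < δ := by
      rw [ae_iff]
      have hset : {y : Euc N | ¬ ‖y‖ < δ} = (Metric.ball (0 : Euc N) δ)ᶜ := by
        ext y
        simp [mem_ball_zero_iff]
      rw [hset, hνdef, withDensity_apply _ measurableSet_ball.compl]
      have hzero : ∀ y ∈ (Metric.ball (0 : Euc N) δ)ᶜ, ((φn y : ENNReal)) = 0 := by
        intro y hy
        have hφ0 : φ y = 0 := by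
          by_contra hne
          exact hy (hφsupport ▸ Function.mem_support.mpr hne)
        simp [hφndef, hφ0]
      calc ∫⁻ y in (Metric.ball (0 : Euc N) δ)ᶜ, ((φn y : ENNReal)) ∂volume
          = ∫⁻ _y in (Metric.ball (0 : Euc N) δ)ᶜ, 0 ∂volume :=
            setLIntegral_congr_fun measurableSet_ball.compl hzero
        _ = 0 := by simp
    have hdiffae : ∀ᵐ y ∂ν, DifferentiableAt ℝ (u i) (x - y) := by
      have h1 : ∀ᵐ z ∂(volume : Measure (Euc N)), DifferentiableAt ℝ (u i) z :=
        (hK i).ae_differentiableAt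
      have hmp : MeasurePreserving (fun y : Euc N => x - y) volume volume :=
        Measure.measurePreserving_sub_left volume x
      have h2 := hmp.quasiMeasurePreserving.ae h1
      exact h2.filter_mono (withDensity_absolutelyContinuous volume _).ae_le
    have hgrad : gradient (w i) x = ∫ y, φ y • g y := by
      rw [hwdef]
      exact SmoothAux.grad_conv φ hφc hφsupp (u i) K (hK i) x
        (((hwcd i).differentiable one_ne_zero) x)
    obtain ⟨CH, hCH⟩ := SmoothAux.bound (H i) (hHc i) (hHper i) (K : ℝ)
    have hgint : Integrable g ν :=
      ⟨hgmeas.aestronglyMeasurable, HasFiniteIntegral.of_bounded (C := (K : ℝ))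
        (ae_of_all _ hgbd)⟩
    have hHcont : Continuous fun p : Euc N => H i x p := (hHc i).comp (Continuous.prodMk_right x)
    have hHgint : Integrable (fun y => H i x (g y)) ν :=
      ⟨(hHcont.measurable.comp hgmeas).aestronglyMeasurable,
        HasFiniteIntegral.of_bounded (C := CH) (ae_of_all _ fun y => by
          rw [Real.norm_eq_abs]; exact hCH x (g y) (hgbd y))⟩
    have hjensen : H i x (∫ y, g y ∂ν) ≤ ∫ y, H i x (g y) ∂ν := by
      refine (hHconv i x).map_integral_le hHcont.continuousOn isClosed_univ
        (ae_of_all _ fun _ => mem_univ _) hgint ?_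
      exact hHgint
    have huintν : ∀ j, Integrable (fun y => u j (x - y)) ν := fun j =>
      ⟨((hucont j).comp (continuous_const.sub continuous_id)).measurable.aestronglyMeasurable,
        HasFiniteIntegral.of_bounded (C := Cu j) (ae_of_all _ fun y => by
          rw [Real.norm_eq_abs]; exact hCu j _)⟩
    have hBuint : Integrable (fun y => ∑ j, B i j * u j (x - y)) ν :=
      integrable_finset_sum _ fun j _ => (huintν j).const_mul _
    have hmulvec : ∀ (v : Fin m → ℝ), B.mulVec v i = ∑ j, B i j * v j := by
      intro v
      simp [Matrix.mulVec, dotProduct]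
    have hpt : ∀ᵐ y ∂ν, H i x (g y) ≤ c - (∑ j, B i j * u j (x - y)) + ε := by
      filter_upwards [hball, hdiffae] with y hy1 hy2
      have hd1 : dist (x - y) x ≤ δf i := by
        rw [dist_eq_norm]
        have hxy : x - y - x = -y := by abel
        rw [hxy, norm_neg]
        exact le_trans hy1.le (hδle i)
      have hstep1 : H i x (g y) ≤ H i (x - y) (g y) + ε := hδ i (x - y) x (g y) (hgbd y) hd1
      have hsd := SmoothAux.insuper_of_diff (u := u i) hy2
      have hstep2 := husub (x - y) i (g y) hsd
      rw [hmulvec] at hstep2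
      simp only [zero_mul, add_zero] at hstep2
      linarith
    have hInt2 : Integrable (fun y => c - (∑ j, B i j * u j (x - y)) + ε) ν := by
      have h := (integrable_const (c + ε)).sub hBuint
      exact h.congr (ae_of_all _ fun y => by simp only [Pi.sub_apply]; ring)
    have hmono := integral_mono_ae hHgint hInt2 hpt
    have hBw : ∫ y, (∑ j, B i j * u j (x - y)) ∂ν = ∑ j, B i j * w j x := by
      rw [integral_finset_sum _ fun j _ => (huintν j).const_mul _]
      refine Finset.sum_congr rfl fun j _ => ?_
      rw [MeasureTheory.integral_const_mul]
      congr 1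
      rw [keyR]
    have hRHS : ∫ y, (c - (∑ j, B i j * u j (x - y)) + ε) ∂ν
        = c - (∑ j, B i j * w j x) + ε := by
      have h1 : ∫ y, (c - (∑ j, B i j * u j (x - y)) + ε) ∂ν
          = ∫ y, ((c + ε) - (∑ j, B i j * u j (x - y))) ∂ν := by
        congr 1
        funext y
        ring
      rw [h1, integral_sub (integrable_const (c + ε)) hBuint, integral_const, hBw]
      simp [measure_univ]
      ring
    have hfinal : H i x (gradient (w i) x) ≤ c - (∑ j, B i j * w j x) + ε := by
      rw [hgrad, ← keyV]
      calc H i x (∫ y, g y ∂ν) ≤ ∫ y, H i x (g y) ∂ν := hjensen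
        _ ≤ ∫ y, (c - (∑ j, B i j * u j (x - y)) + ε) ∂ν := hmono
        _ = c - (∑ j, B i j * w j x) + ε := hRHS
    rw [hmulvec]
    linarith
end
end
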